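/- arXiv:2603.22063 — 2 statements merged into one kernel-verified Lean document; each statement's English description precedes it below -/
import Mathlib

section
/- Let T be a collection of nonempty subsets of a finite universe U, and let (V, A, E) be a DAG compression of the twinned incidence graph of T (with first shore V̄₁ = {a_S, b_S : S ∈ T}) such that every compression edge of E is of the form (x, c) with x ∈ V̄₁, and such that each vertex a_S and each vertex b_S is an endpoint of at most one compression edge. Then for every S ∈ T there is exactly one compression edge incident to a_S, it has the form (a_S, c) for some c ∈ V, and this c satisfies C(c) = S; in particular, for every S ∈ T there exists a cluster vertex c ∈ V with C(c) = S. -/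
open Finset

section Defs

variable {α : Type*}

/-- The arc relation induced by a finite set of arcs. -/
def ArcRel (A : Finset (α × α)) (x y : α) : Prop := (x, y) ∈ A

/-- The cluster of a vertex `v`: the set of original vertices (elements of `Vbar`,
which are exactly the sinks of the cluster DAG) reachable from `v` in `(V, A)`. -/
def Cluster [DecidableEq α] (Vbar : Finset α) (A : Finset (α × α)) (v : α) : Set α :=
  {u | u ∈ Vbar ∧ Relation.ReflTransGen (ArcRel A) v u}

/-- `(V, A, E)` is a DAG compression of the directed graph `(Vbar, Ebar)`. -/
structure IsDagCompression [DecidableEq α] (Vbar : Finset α) (Ebar : Finset (α × α))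
    (V : Finset α) (A E : Finset (α × α)) : Prop where
  vbar_subset : Vbar ⊆ V
  arcs_subset : A ⊆ V ×ˢ V
  acyclic : ∀ v : α, ¬ Relation.TransGen (ArcRel A) v v
  sinks : ∀ v ∈ V, ((∀ u, (v, u) ∉ A) ↔ v ∈ Vbar)
  edges_subset : E ⊆ V ×ˢ V
  represents : (↑Ebar : Set (α × α)) =
    ⋃ e ∈ E, (Cluster Vbar A e.1) ×ˢ (Cluster Vbar A e.2)

/-- An optimal DAG compression: no DAG compression of the same graph has smaller size
`|A| + |E|`. -/
def IsOptimalDagCompression [DecidableEq α] (Vbar : Finset α) (Ebar : Finset (α × α))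
    (V : Finset α) (A E : Finset (α × α)) : Prop :=
  IsDagCompression Vbar Ebar V A E ∧
    ∀ (V' : Finset α) (A' E' : Finset (α × α)),
      IsDagCompression Vbar Ebar V' A' E' → A.card + E.card ≤ A'.card + E'.card

/-- The minimum size `|A| + |E|` of a DAG compression of `(Vbar, Ebar)`. -/
noncomputable def minCompSize [DecidableEq α] (Vbar : Finset α) (Ebar : Finset (α × α)) : ℕ :=
  sInf {n | ∃ (V : Finset α) (A E : Finset (α × α)),
    IsDagCompression Vbar Ebar V A E ∧ A.card + E.card = n}

/-- Two vertices are twins in a directed graph with edge set `F`. -/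
def Twins (F : Finset (α × α)) (t₁ t₂ : α) : Prop :=
  (∀ v, (v, t₁) ∈ F ↔ (v, t₂) ∈ F) ∧ (∀ v, (t₁, v) ∈ F ↔ (t₂, v) ∈ F)

/-- `(V, A)` is a rooted tree: there is a root `r ∈ V` from which every vertex of `V`
is reachable by a unique directed path. -/
def IsTreeOn (V : Finset α) (A : Finset (α × α)) : Prop :=
  ∃ r ∈ V, ∀ v ∈ V, ∃! l : List α,
    l.Chain' (ArcRel A) ∧ l.head? = some r ∧ l.getLast? = some v

end Defs

/-- Vertex set of the `g × g` rook graph: the grid `{1,…,g} × {1,…,g}`. -/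
def rookV (g : ℕ) : Finset (ℕ × ℕ) := Finset.Icc 1 g ×ˢ Finset.Icc 1 g

/-- Edge set of the `g × g` rook graph: `(r₁,c₁) → (r₂,c₂)` iff `r₁ = r₂ ∨ c₁ = c₂`. -/
def rookE (g : ℕ) : Finset ((ℕ × ℕ) × (ℕ × ℕ)) :=
  (rookV g ×ˢ rookV g).filter (fun e => e.1.1 = e.2.1 ∨ e.1.2 = e.2.2)

section Tig

variable {α : Type*} [DecidableEq α]

/-- Vertex type used for twinned incidence graphs: either an element of the universe
(second shore) or one of the fresh vertices `a_S`, `b_S` (first shore). -/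
abbrev TigVertex (α : Type*) := α ⊕ (Finset α × Bool)

/-- The fresh vertex `a_S`. -/
def aVert (S : Finset α) : TigVertex α := Sum.inr (S, false)

/-- The fresh vertex `b_S`. -/
def bVert (S : Finset α) : TigVertex α := Sum.inr (S, true)

/-- Vertex set of the twinned incidence graph of a collection `T` of subsets of `U`. -/
def tigV (U : Finset α) (T : Finset (Finset α)) : Finset (TigVertex α) :=
  U.image Sum.inl ∪ T.image aVert ∪ T.image bVert

/-- Edge set of the twinned incidence graph: edges `(a_S, s)` and `(b_S, s)` for
`S ∈ T` and `s ∈ S`. -/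
def tigE (T : Finset (Finset α)) : Finset (TigVertex α × TigVertex α) :=
  T.biUnion fun S =>
    S.image (fun s => (aVert S, Sum.inl s)) ∪ S.image (fun s => (bVert S, Sum.inl s))

end Tig

/-- `{S ∩ {1,…,i} : S ∈ T, 1 ≤ i ≤ m} ∖ {∅}` together with all singletons `{j}`, `j ∈ {1,…,m}`. -/
def hatCollection (m : ℕ) (T : Finset (Finset ℕ)) : Finset (Finset ℕ) :=
  (Finset.Icc 1 m).image (fun j => ({j} : Finset ℕ)) ∪
    ((T ×ˢ Finset.Icc 1 m).image (fun p => p.1 ∩ Finset.Icc 1 p.2)).erase ∅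
section Aux
variable {β : Type*} [DecidableEq β]

lemma cluster_of_sink {Vbar : Finset β} {A : Finset (β × β)} {v : β}
    (hsink : ∀ u, (v, u) ∉ A) (hv : v ∈ Vbar) :
    Cluster Vbar A v = {v} := by
  ext u
  simp only [Cluster, Set.mem_setOf_eq, Set.mem_singleton_iff]
  constructor
  · rintro ⟨hu, hr⟩
    rcases hr.cases_head with h | ⟨w, hw, _⟩
    · exact h.symm
    · exact absurd hw (hsink w)
  · rintro rfl; exact ⟨hv, Relation.ReflTransGen.refl⟩

end Aux

lemma aVert_mem_tigV {α : Type*} [DecidableEq α] {U : Finset α} {T : Finset (Finset α)}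
    {S : Finset α} (hS : S ∈ T) : aVert S ∈ tigV U T := by
  simp only [tigV, Finset.mem_union, Finset.mem_image]
  exact Or.inl (Or.inr ⟨S, hS, rfl⟩)

lemma bVert_mem_tigV {α : Type*} [DecidableEq α] {U : Finset α} {T : Finset (Finset α)}
    {S : Finset α} (hS : S ∈ T) : bVert S ∈ tigV U T := by
  simp only [tigV, Finset.mem_union, Finset.mem_image]
  exact Or.inr ⟨S, hS, rfl⟩

lemma mem_tigE_iff {α : Type*} [DecidableEq α] {T : Finset (Finset α)}
    {p : TigVertex α × TigVertex α} :
    p ∈ tigE T ↔ ∃ S ∈ T, ∃ s ∈ S,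
      p = (aVert S, Sum.inl s) ∨ p = (bVert S, Sum.inl s) := by
  simp only [tigE, Finset.mem_biUnion, Finset.mem_union, Finset.mem_image]
  constructor
  · rintro ⟨S, hS, (⟨s, hs, rfl⟩ | ⟨s, hs, rfl⟩)⟩
    · exact ⟨S, hS, s, hs, Or.inl rfl⟩
    · exact ⟨S, hS, s, hs, Or.inr rfl⟩
  · rintro ⟨S, hS, s, hs, (rfl | rfl)⟩
    · exact ⟨S, hS, Or.inl ⟨s, hs, rfl⟩⟩
    · exact ⟨S, hS, Or.inr ⟨s, hs, rfl⟩⟩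

/-- in a DAG compression of the twinned incidence graph of a collection of
nonempty sets in which every compression edge starts in the first shore and every
`a_S`, `b_S` is an endpoint of at most one compression edge, for every `S ∈ T` there is
exactly one compression edge incident to `a_S`; it has the form `(a_S, c)` and
`C(c) = S`. -/
theorem twinned_cluster_vertices_exist {α : Type*} [DecidableEq α]
    (U : Finset α) (T : Finset (Finset α)) (hT : ∀ S ∈ T, S ⊆ U)
    (hne : ∀ S ∈ T, S.Nonempty)
    (V : Finset (TigVertex α)) (A E : Finset (TigVertex α × TigVertex α))
    (hD : IsDagCompression (tigV U T) (tigE T) V A E)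
    (hshore : ∀ e ∈ E, ∃ S ∈ T, e.1 = aVert S ∨ e.1 = bVert S)
    (hdegA : ∀ S ∈ T, (E.filter (fun e => e.1 = aVert S ∨ e.2 = aVert S)).card ≤ 1)
    (hdegB : ∀ S ∈ T, (E.filter (fun e => e.1 = bVert S ∨ e.2 = bVert S)).card ≤ 1) :
    ∀ S ∈ T, ∃ c ∈ V,
      E.filter (fun e => e.1 = aVert S ∨ e.2 = aVert S) = {(aVert S, c)} ∧
      Cluster (tigV U T) A c = Sum.inl '' (↑S : Set α) := by
  intro S hS
  -- clusters of first-shore vertices are singletons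
  have hsingle : ∀ e ∈ E, Cluster (tigV U T) A e.1 = {e.1} := by
    intro e he
    obtain ⟨S', hS', h | h⟩ := hshore e he
    · have hmem : e.1 ∈ tigV U T := h ▸ aVert_mem_tigV hS'
      exact cluster_of_sink (fun u => ((hD.sinks e.1 (hD.vbar_subset hmem)).mpr hmem) u) hmem
    · have hmem : e.1 ∈ tigV U T := h ▸ bVert_mem_tigV hS'
      exact cluster_of_sink (fun u => ((hD.sinks e.1 (hD.vbar_subset hmem)).mpr hmem) u) hmem
  -- any graph edge (aVert S, u) is covered by a compression edge starting at aVert S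
  have hcover : ∀ u : TigVertex α, (aVert S, u) ∈ tigE T →
      ∃ e ∈ E, e.1 = aVert S ∧ u ∈ Cluster (tigV U T) A e.2 := by
    intro u hu
    have : ((aVert S, u) : TigVertex α × TigVertex α) ∈
        (↑(tigE T) : Set (TigVertex α × TigVertex α)) := hu
    rw [hD.represents] at this
    simp only [Set.mem_iUnion, Set.mem_prod] at this
    obtain ⟨e, he, h1, h2⟩ := this
    have := hsingle e he
    rw [this] at h1
    exact ⟨e, he, h1.symm, h2⟩
  -- there is a compression edge (aVert S, c)
  obtain ⟨s₀, hs₀⟩ := hne S hS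
  have hedge0 : ((aVert S, Sum.inl s₀) : TigVertex α × TigVertex α) ∈ tigE T :=
    mem_tigE_iff.mpr ⟨S, hS, s₀, hs₀, Or.inl rfl⟩
  obtain ⟨e₀, he₀, he₀1, hs₀c⟩ := hcover (Sum.inl s₀) hedge0
  set c := e₀.2 with hc
  have he₀eq : e₀ = (aVert S, c) := Prod.ext he₀1 rfl
  have hcV : c ∈ V := (Finset.mem_product.mp (hD.edges_subset he₀)).2
  have hmemf : e₀ ∈ E.filter (fun e => e.1 = aVert S ∨ e.2 = aVert S) :=
    Finset.mem_filter.mpr ⟨he₀, Or.inl he₀1⟩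
  have hfilter : E.filter (fun e => e.1 = aVert S ∨ e.2 = aVert S) = {(aVert S, c)} := by
    apply Finset.eq_singleton_iff_unique_mem.mpr
    refine ⟨he₀eq ▸ hmemf, fun x hx => ?_⟩
    have := Finset.card_le_one.mp (hdegA S hS) x hx e₀ hmemf
    rw [this, he₀eq]
  refine ⟨c, hcV, hfilter, ?_⟩
  ext u
  constructor
  · rintro ⟨hu1, hu2⟩
    -- (aVert S, u) ∈ Ebar via edge e₀
    have hASmem : aVert S ∈ tigV U T := aVert_mem_tigV hS
    have : ((aVert S, u) : TigVertex α × TigVertex α) ∈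
        (↑(tigE T) : Set (TigVertex α × TigVertex α)) := by
      rw [hD.represents]
      simp only [Set.mem_iUnion, Set.mem_prod]
      refine ⟨e₀, he₀, ?_, ⟨hu1, hu2⟩⟩
      rw [hsingle e₀ he₀, he₀1]; rfl
    obtain ⟨S', hS', s, hs, h | h⟩ := mem_tigE_iff.mp this
    · obtain ⟨h1, h2⟩ := Prod.mk.injEq _ _ _ _ ▸ h
      have : S = S' := by simpa [aVert] using h1
      exact ⟨s, this ▸ hs, h2.symm⟩
    · obtain ⟨h1, _⟩ := Prod.mk.injEq _ _ _ _ ▸ h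
      simp [aVert, bVert] at h1
  · rintro ⟨s, hs, rfl⟩
    have hedge : ((aVert S, Sum.inl s) : TigVertex α × TigVertex α) ∈ tigE T :=
      mem_tigE_iff.mpr ⟨S, hS, s, hs, Or.inl rfl⟩
    obtain ⟨e', he', he'1, hsc⟩ := hcover (Sum.inl s) hedge
    have hmemf' : e' ∈ E.filter (fun e => e.1 = aVert S ∨ e.2 = aVert S) :=
      Finset.mem_filter.mpr ⟨he', Or.inl he'1⟩
    have : e' = (aVert S, c) := by
      have := hfilter ▸ hmemf'
      simpa using this
    rw [this] at hsc
    exact hsc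
end

section
/- Let n ≥ 2, U = {1,…,n}, and let T be a collection of subsets of U with ⋃T = U and U ∉ T. Define T̂ = {{j} : j ∈ U} ∪ ({S ∩ {1,…,i} : S ∈ T, 1 ≤ i ≤ n} ∖ {∅}), and let ŝ be the minimum size of a DAG compression of the twinned incidence graph of T̂. Then for every natural number k: there exists X ⊆ T with ⋃X = U and |X| ≤ k if and only if the twinned incidence graph of T̂ ∪ {U} has a DAG compression of size at most ŝ + k + 2. -/
open Finset

/-!
Each twin `a_S`, `b_S` of a twinned incidence graph is the source of a compression edge or the
head of an arc, so a compression of the graph of a family `F` of nonempty sets has size at least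
`2|F|`. Given a compression of the graph of `insert M F`, keep the vertices that still reach the
graph of `F` and are reached from it or from an edge between such vertices: this compresses the
graph of `F`, and the discarded arcs and edges pay for a cover of `M` by members of any family `G`
absorbing `F`, with two to spare. Excising a largest set with at least two elements, which then
needs a cover by at least two sets, gives by induction `ŝ ≥ 2|T̂| + 2|{S ∈ T̂ | 2 ≤ |S|}|`. The
trie of `T̂`, where each such `S` points to `S` minus its maximum and to its maximum, attains
this bound, and a cover `X ⊆ T` of `U` costs `|X| + 2` on top of it: a vertex for `U` pointing to
the trie vertices of `X`, and the edges from `a_U` and `b_U`. Conversely, excising `U` (with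
`G = T`) from a compression of size at most `ŝ + k + 2` leaves a compression of size at least `ŝ`
and a cover of `U` by at most `k` members of `T`.
-/

open Relation

theorem Relation.ReflTransGen.exists_crossing {β : Type*} {r : β → β → Prop} {P : β → Prop}
    {x y : β} (h : ReflTransGen r x y) (hx : P x) (hy : ¬ P y) :
    ∃ z z', r z z' ∧ P z ∧ ¬ P z' ∧ ReflTransGen r x z ∧ ReflTransGen r z' y := by
  induction h with
  | refl => exact absurd hx hy
  | @tail b c hxb hbc ih =>
    by_cases hb : P b
    · exact ⟨b, c, hbc, hb, hy, hxb, .refl⟩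
    · obtain ⟨z, z', hzz', hz, hz', hxz, hz'b⟩ := ih hb
      exact ⟨z, z', hzz', hz, hz', hxz, hz'b.tail hbc⟩

section General

variable {α : Type*}

theorem Finset.eq_singleton_of_card_lt_two {S : Finset α} {x : α} (hx : x ∈ S)
    (hS : ¬ 2 ≤ S.card) : S = {x} :=
  eq_singleton_iff_unique_mem.2 ⟨hx, fun y hy => card_le_one.1 (by omega) y hy x hx⟩

theorem card_filter_add_card_le [DecidableEq α] {s t : Finset α} {p : α → Prop}
    [DecidablePred p] (hts : t ⊆ s) (ht : ∀ x ∈ t, ¬ p x) :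
    (s.filter p).card + t.card ≤ s.card := by
  rw [← card_union_of_disjoint (disjoint_left.2 fun x hx hxt => ht x hxt (mem_filter.1 hx).2)]
  exact card_le_card (union_subset (filter_subset _ _) hts)

theorem exists_subset_sup_card_le {ι : Type*} [DecidableEq α] (I : Finset ι)
    (G : Finset (Finset α)) {M : Finset α} (P : ι → Finset α → Prop)
    (h : ∀ j ∈ M, ∃ i ∈ I, (∃ g ∈ G, P i g) ∧ ∀ g, P i g → j ∈ g) :
    ∃ X ⊆ G, M ⊆ X.sup id ∧ X.card ≤ I.card := by
  classical
  let f : ι → Finset α := fun i => if hi : ∃ g ∈ G, P i g then hi.choose else ∅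
  have hf : ∀ i, (∃ g ∈ G, P i g) → f i ∈ G ∧ P i (f i) := fun i hi => by
    simpa only [f, dif_pos hi] using hi.choose_spec
  refine ⟨(I.filter fun i => ∃ g ∈ G, P i g).image f, ?_, fun j hj => ?_,
    card_image_le.trans (card_filter_le _ _)⟩
  · simp only [subset_iff, mem_image, mem_filter]
    rintro _ ⟨i, ⟨-, hi⟩, rfl⟩
    exact (hf i hi).1
  · obtain ⟨i, hi, hex, hall⟩ := h j hj
    exact mem_sup.2 ⟨f i, mem_image.2 ⟨i, mem_filter.2 ⟨hi, hex⟩, rfl⟩, hall _ (hf i hex).2⟩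

theorem two_le_card_of_subset_sup [DecidableEq α] {M : Finset α} {X : Finset (Finset α)}
    (hMne : M.Nonempty) (hMX : M ⊆ X.sup id) (hX : ∀ g ∈ X, ¬ M ⊆ g) : 2 ≤ X.card := by
  by_contra! h
  obtain ⟨j, hj⟩ := hMne
  obtain ⟨g, hg, -⟩ := mem_sup.1 (hMX hj)
  refine hX g hg fun i hi => ?_
  obtain ⟨g', hg', hig'⟩ := mem_sup.1 (hMX hi)
  rwa [card_le_one.1 (by omega) g' hg' g hg] at hig'

end General

section Compression

variable {β : Type*}

theorem eq_of_reflTransGen_of_forall_notMem {A : Finset (β × β)} {v w : β}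
    (hv : ∀ u, (v, u) ∉ A) (h : ReflTransGen (ArcRel A) v w) : w = v := by
  rcases h.cases_head with rfl | ⟨c, hc, -⟩
  · rfl
  · exact absurd hc (hv c)

theorem not_transGen_of_rank {A : Finset (β × β)} (f : β → ℕ) (hf : ∀ p ∈ A, f p.2 < f p.1)
    (v : β) : ¬ TransGen (ArcRel A) v v := by
  suffices ∀ x y, TransGen (ArcRel A) x y → f y < f x from fun h => lt_irrefl _ (this v v h)
  intro x y h
  induction h with
  | single hxy => exact hf _ hxy
  | tail _ hyz ih => exact (hf _ hyz).trans ih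

variable [DecidableEq β]

theorem cluster_subset_of_reflTransGen {Vb : Finset β} {A : Finset (β × β)} {v w : β}
    (h : ReflTransGen (ArcRel A) v w) : Cluster Vb A w ⊆ Cluster Vb A v :=
  fun _ hu => ⟨hu.1, h.trans hu.2⟩

theorem cluster_mono {Vb Vb' : Finset β} (h : Vb ⊆ Vb') (A : Finset (β × β)) (v : β) :
    Cluster Vb A v ⊆ Cluster Vb' A v :=
  fun _ hu => ⟨h hu.1, hu.2⟩

theorem cluster_eq_singleton {Vb : Finset β} {A : Finset (β × β)} {v : β} (hv : v ∈ Vb)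
    (hs : ∀ u, (v, u) ∉ A) : Cluster Vb A v = {v} := by
  ext u
  exact ⟨fun hu => eq_of_reflTransGen_of_forall_notMem hs hu.2, by rintro rfl; exact ⟨hv, .refl⟩⟩

theorem cluster_eq_biUnion {Vb : Finset β} {A : Finset (β × β)} {v : β} (hv : v ∉ Vb)
    {W : Finset β} (hW : ∀ u, (v, u) ∈ A ↔ u ∈ W) :
    Cluster Vb A v = ⋃ w ∈ W, Cluster Vb A w := by
  ext u
  simp only [Set.mem_iUnion]
  constructor
  · rintro ⟨hu, hvu⟩
    rcases hvu.cases_head with rfl | ⟨c, hvc, hcu⟩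
    · exact absurd hu hv
    · exact ⟨c, (hW c).1 hvc, hu, hcu⟩
  · rintro ⟨w, hw, hu⟩
    exact cluster_subset_of_reflTransGen (.single ((hW w).2 hw)) hu

theorem coe_eq_biUnion_cluster {Vb : Finset β} {Eb A E : Finset (β × β)}
    (h : ∀ x y, (x, y) ∈ Eb ↔ ∃ e ∈ E, x ∈ Cluster Vb A e.1 ∧ y ∈ Cluster Vb A e.2) :
    (↑Eb : Set (β × β)) = ⋃ e ∈ E, Cluster Vb A e.1 ×ˢ Cluster Vb A e.2 := by
  ext ⟨x, y⟩
  simp only [Finset.mem_coe, Set.mem_iUnion, Set.mem_prod, exists_prop]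
  exact h x y

theorem isDagCompression_self {Vbar : Finset β} {Ebar : Finset (β × β)}
    (h : Ebar ⊆ Vbar ×ˢ Vbar) : IsDagCompression Vbar Ebar Vbar ∅ Ebar := by
  have hcl : ∀ v ∈ Vbar, Cluster Vbar ∅ v = {v} := fun v hv => cluster_eq_singleton hv (by simp)
  refine ⟨subset_rfl, by simp, not_transGen_of_rank (fun _ => 0) (by simp), ?_, h, ?_⟩
  · simp
  · refine coe_eq_biUnion_cluster fun x y => ⟨fun hxy => ?_, ?_⟩
    · obtain ⟨hx, hy⟩ := mem_product.1 (h hxy)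
      exact ⟨(x, y), hxy, by simp [hcl x hx, hcl y hy]⟩
    · rintro ⟨e, he, hx, hy⟩
      obtain ⟨he1, he2⟩ := mem_product.1 (h he)
      rw [hcl _ he1] at hx
      rw [hcl _ he2] at hy
      simp_all

theorem isDagCompression_of_cluster_eq {Vbar V : Finset β} {Ebar A : Finset (β × β)}
    (hE : Ebar ⊆ Vbar ×ˢ Vbar) (hV : Vbar ⊆ V) (hA : A ⊆ V ×ˢ V)
    (hacyc : ∀ v, ¬ TransGen (ArcRel A) v v) (hsinks : ∀ v ∈ V, (∀ u, (v, u) ∉ A) ↔ v ∈ Vbar)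
    (n : β → β) (hn : ∀ x ∈ Ebar.image Prod.fst, n x ∈ V)
    (hcl : ∀ x ∈ Ebar.image Prod.fst, Cluster Vbar A (n x) = {y | (x, y) ∈ Ebar}) :
    IsDagCompression Vbar Ebar V A ((Ebar.image Prod.fst).image fun x => (x, n x)) := by
  set Src := Ebar.image Prod.fst
  have hsrc : ∀ x ∈ Src, x ∈ Vbar := fun x hx => by
    obtain ⟨e, he, rfl⟩ := mem_image.1 hx
    exact (mem_product.1 (hE he)).1
  have hclx : ∀ x ∈ Vbar, Cluster Vbar A x = {x} :=
    fun x hx => cluster_eq_singleton hx ((hsinks x (hV hx)).2 hx)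
  refine ⟨hV, hA, hacyc, hsinks, fun e he => ?_,
    coe_eq_biUnion_cluster fun x y => ⟨fun h => ?_, ?_⟩⟩
  · obtain ⟨x, hx, rfl⟩ := mem_image.1 he
    exact mem_product.2 ⟨hV (hsrc x hx), hn x hx⟩
  · have hx : x ∈ Src := mem_image_of_mem _ h
    refine ⟨(x, n x), mem_image_of_mem _ hx, by simp [hclx x (hsrc x hx)], ?_⟩
    rw [hcl x hx]
    exact h
  · rintro ⟨e, he, hxe, hye⟩
    obtain ⟨x', hx', rfl⟩ := mem_image.1 he
    rw [hclx x' (hsrc x' hx'), Set.mem_singleton_iff] at hxe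
    subst hxe
    rwa [hcl x hx'] at hye

namespace IsDagCompression

variable {Vbar V : Finset β} {Ebar A E : Finset (β × β)}

theorem notMem_arcs (hD : IsDagCompression Vbar Ebar V A E) {v : β} (hv : v ∈ Vbar) (u : β) :
    (v, u) ∉ A :=
  (hD.sinks v (hD.vbar_subset hv)).2 hv u

theorem cluster_of_mem (hD : IsDagCompression Vbar Ebar V A E) {v : β} (hv : v ∈ Vbar) :
    Cluster Vbar A v = {v} :=
  cluster_eq_singleton hv (hD.notMem_arcs hv)

theorem eq_of_reflTransGen (hD : IsDagCompression Vbar Ebar V A E) {v w : β} (hv : v ∈ Vbar)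
    (h : ReflTransGen (ArcRel A) v w) : w = v :=
  eq_of_reflTransGen_of_forall_notMem (hD.notMem_arcs hv) h

theorem mem_of_mem_cluster (hD : IsDagCompression Vbar Ebar V A E) {e : β × β} (he : e ∈ E)
    {x y : β} (hx : x ∈ Cluster Vbar A e.1) (hy : y ∈ Cluster Vbar A e.2) : (x, y) ∈ Ebar := by
  have : (x, y) ∈ (↑Ebar : Set (β × β)) := by
    rw [hD.represents]
    exact Set.mem_biUnion he ⟨hx, hy⟩
  exact_mod_cast this

theorem exists_of_mem (hD : IsDagCompression Vbar Ebar V A E) {x y : β} (h : (x, y) ∈ Ebar) :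
    ∃ e ∈ E, x ∈ Cluster Vbar A e.1 ∧ y ∈ Cluster Vbar A e.2 := by
  have : (x, y) ∈ (↑Ebar : Set (β × β)) := h
  rw [hD.represents] at this
  simpa only [Set.mem_iUnion, Set.mem_prod, exists_prop] using this

/-- A vertex with an outgoing edge is the source of a compression edge or the head of an arc. -/
theorem card_image_fst_le (hD : IsDagCompression Vbar Ebar V A E) :
    (Ebar.image Prod.fst).card ≤ A.card + E.card := by
  have hsub : Ebar.image Prod.fst ⊆ A.image Prod.snd ∪ E.image Prod.fst := by
    simp only [subset_iff, mem_image, mem_union]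
    rintro x ⟨⟨x, y⟩, hxy, rfl⟩
    obtain ⟨e, he, hx, -⟩ := hD.exists_of_mem hxy
    rcases hx.2.cases_tail with h | ⟨t, -, htx⟩
    · exact .inr ⟨e, he, h.symm⟩
    · exact .inl ⟨(t, x), htx, rfl⟩
  calc (Ebar.image Prod.fst).card ≤ (A.image Prod.snd ∪ E.image Prod.fst).card := card_le_card hsub
    _ ≤ A.card + E.card := (card_union_le _ _).trans (add_le_add card_image_le card_image_le)

end IsDagCompression

theorem minCompSize_le {Vbar V : Finset β} {Ebar A E : Finset (β × β)}
    (hD : IsDagCompression Vbar Ebar V A E) : minCompSize Vbar Ebar ≤ A.card + E.card :=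
  Nat.sInf_le ⟨V, A, E, hD, rfl⟩

theorem le_minCompSize {Vbar V : Finset β} {Ebar A E : Finset (β × β)} {B : ℕ}
    (hD : IsDagCompression Vbar Ebar V A E)
    (hB : ∀ V A E, IsDagCompression Vbar Ebar V A E → B ≤ A.card + E.card) :
    B ≤ minCompSize Vbar Ebar := by
  have hne : {n | ∃ (V : Finset β) (A E : Finset (β × β)),
      IsDagCompression Vbar Ebar V A E ∧ A.card + E.card = n}.Nonempty := ⟨_, V, A, E, hD, rfl⟩
  obtain ⟨V', A', E', hD', hsize⟩ := Nat.sInf_mem hne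
  rw [minCompSize, ← hsize]
  exact hB V' A' E' hD'

end Compression

section TwinnedIncidence

variable {α : Type*} [DecidableEq α]

@[simp]
theorem inl_mem_tigV {U : Finset α} {T : Finset (Finset α)} {j : α} :
    (Sum.inl j : TigVertex α) ∈ tigV U T ↔ j ∈ U := by
  simp [tigV, aVert, bVert]

@[simp]
theorem inr_mem_tigV {U : Finset α} {T : Finset (Finset α)} {S : Finset α} {b : Bool} :
    (Sum.inr (S, b) : TigVertex α) ∈ tigV U T ↔ S ∈ T := by
  cases b <;> simp [tigV, aVert, bVert]

theorem mem_tigE {T : Finset (Finset α)} {x y : TigVertex α} :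
    (x, y) ∈ tigE T ↔ ∃ S ∈ T, ∃ b, x = Sum.inr (S, b) ∧ ∃ j ∈ S, y = Sum.inl j := by
  simp only [tigE, aVert, bVert, mem_biUnion, mem_union, mem_image, Prod.mk.injEq]
  constructor
  · rintro ⟨S, hS, ⟨j, hj, rfl, rfl⟩ | ⟨j, hj, rfl, rfl⟩⟩
    exacts [⟨S, hS, false, rfl, j, hj, rfl⟩, ⟨S, hS, true, rfl, j, hj, rfl⟩]
  · rintro ⟨S, hS, b, rfl, j, hj, rfl⟩
    cases b
    exacts [⟨S, hS, .inl ⟨j, hj, rfl, rfl⟩⟩, ⟨S, hS, .inr ⟨j, hj, rfl, rfl⟩⟩]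

@[simp]
theorem inr_inl_mem_tigE {T : Finset (Finset α)} {S : Finset α} {b : Bool} {j : α} :
    ((Sum.inr (S, b), Sum.inl j) : TigVertex α × TigVertex α) ∈ tigE T ↔ S ∈ T ∧ j ∈ S := by
  simp [mem_tigE]

theorem setOf_inr_mem_tigE {T : Finset (Finset α)} {S : Finset α} (hS : S ∈ T) (b : Bool) :
    {y | (Sum.inr (S, b), y) ∈ tigE T} = Sum.inl '' ↑S := by
  ext (j | q)
  · exact ⟨fun h => ⟨j, (inr_inl_mem_tigE.1 h).2, rfl⟩,
      fun ⟨j', hj', h⟩ => Sum.inl_injective h ▸ inr_inl_mem_tigE.2 ⟨hS, hj'⟩⟩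
  · simp [mem_tigE]

theorem exists_eq_inr_of_mem_image_fst {T : Finset (Finset α)} {x : TigVertex α}
    (hx : x ∈ (tigE T).image Prod.fst) : ∃ S ∈ T, ∃ b, x = Sum.inr (S, b) := by
  obtain ⟨⟨_, _⟩, hxy, rfl⟩ := mem_image.1 hx
  obtain ⟨S, hS, b, rfl, -⟩ := mem_tigE.1 hxy
  exact ⟨S, hS, b, rfl⟩

theorem tigE_subset {U : Finset α} {T : Finset (Finset α)} (hT : ∀ S ∈ T, S ⊆ U) :
    tigE T ⊆ tigV U T ×ˢ tigV U T := by
  rintro ⟨x, y⟩ hxy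
  obtain ⟨S, hS, b, rfl, j, hj, rfl⟩ := mem_tigE.1 hxy
  simpa using ⟨hS, hT S hS hj⟩

theorem card_image_fst_tigE {T : Finset (Finset α)} (hT : ∀ S ∈ T, S.Nonempty) :
    ((tigE T).image Prod.fst).card = 2 * T.card := by
  have : (tigE T).image Prod.fst = (T ×ˢ (univ : Finset Bool)).image Sum.inr := by
    ext x
    simp only [mem_image, mem_tigE, mem_product, mem_univ, and_true, Prod.exists]
    constructor
    · rintro ⟨x, y, ⟨S, hS, b, rfl, -⟩, rfl⟩
      exact ⟨S, b, hS, rfl⟩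
    · rintro ⟨S, b, hS, rfl⟩
      obtain ⟨j, hj⟩ := hT S hS
      exact ⟨_, _, ⟨S, hS, b, rfl, j, hj, rfl⟩, rfl⟩
  rw [this, card_image_of_injective _ Sum.inr_injective, card_product, card_univ,
    Fintype.card_bool, mul_comm]

theorem two_mul_card_le_of_isDagCompression {U : Finset α} {T : Finset (Finset α)}
    (hT : ∀ S ∈ T, S.Nonempty) {V : Finset (TigVertex α)}
    {A E : Finset (TigVertex α × TigVertex α)}
    (hD : IsDagCompression (tigV U T) (tigE T) V A E) : 2 * T.card ≤ A.card + E.card :=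
  card_image_fst_tigE hT ▸ hD.card_image_fst_le

theorem tigV_mono {U : Finset α} {T T' : Finset (Finset α)} (h : T ⊆ T') :
    tigV U T ⊆ tigV U T' := by
  rintro (j | ⟨S, b⟩) hv
  · simpa using hv
  · simpa using h (inr_mem_tigV.1 hv)

theorem tigE_eq_filter {U M : Finset α} {F : Finset (Finset α)}
    (hFU : ∀ S ∈ F, S ⊆ U) :
    tigE F = (tigE (insert M F)).filter fun e => e.1 ∈ tigV U F ∧ e.2 ∈ tigV U F := by
  ext ⟨x, y⟩
  simp only [mem_filter, mem_tigE, mem_insert]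
  constructor
  · rintro ⟨S, hS, b, rfl, j, hj, rfl⟩
    exact ⟨⟨S, .inr hS, b, rfl, j, hj, rfl⟩, by simpa using hS, by simpa using hFU S hS hj⟩
  · rintro ⟨⟨S, -, b, rfl, j, hj, rfl⟩, hS, -⟩
    exact ⟨S, by simpa using hS, b, rfl, j, hj, rfl⟩

namespace IsDagCompression

variable {U : Finset α} {T : Finset (Finset α)} {V : Finset (TigVertex α)}
  {A E : Finset (TigVertex α × TigVertex α)}

theorem inl_notMem_cluster (hD : IsDagCompression (tigV U T) (tigE T) V A E) {e}
    (he : e ∈ E) {w : TigVertex α} (hw : w ∈ Cluster (tigV U T) A e.2) (i : α) :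
    Sum.inl i ∉ Cluster (tigV U T) A e.1 := fun hi => by
  simpa [mem_tigE] using hD.mem_of_mem_cluster he hi hw

theorem exists_eq_inl_of_mem_cluster (hD : IsDagCompression (tigV U T) (tigE T) V A E) {e}
    (he : e ∈ E) {S : Finset α} {b : Bool} (hS : Sum.inr (S, b) ∈ Cluster (tigV U T) A e.1)
    {w : TigVertex α} (hw : w ∈ Cluster (tigV U T) A e.2) : ∃ j ∈ S, w = Sum.inl j := by
  have := hD.mem_of_mem_cluster he hS hw
  simp only [mem_tigE, Sum.inr.injEq, Prod.mk.injEq] at this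
  obtain ⟨_, -, _, ⟨rfl, rfl⟩, hw⟩ := this
  exact hw

end IsDagCompression

end TwinnedIncidence

section Restrict

variable {β : Type*} [DecidableEq β] {Vb0 : Finset β} {A E : Finset (β × β)}

def Alive (Vb0 : Finset β) (A : Finset (β × β)) (v : β) : Prop := (Cluster Vb0 A v).Nonempty

open scoped Classical in
noncomputable def aliveEdges (Vb0 : Finset β) (A E : Finset (β × β)) : Finset (β × β) :=
  E.filter fun e => Alive Vb0 A e.1 ∧ Alive Vb0 A e.2

/-- Only alive vertices reachable from `Vb0` or from an endpoint of an alive edge are kept: the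
excision of a twin pair relies on dropping the others (`IsScattered.not_isKept`). -/
def IsKept (Vb0 : Finset β) (A E : Finset (β × β)) (v : β) : Prop :=
  Alive Vb0 A v ∧ ∃ s, (s ∈ Vb0 ∨ ∃ e ∈ aliveEdges Vb0 A E, e.1 = s ∨ e.2 = s) ∧
    ReflTransGen (ArcRel A) s v

open scoped Classical in
noncomputable def keptArcs (Vb0 : Finset β) (A E : Finset (β × β)) : Finset (β × β) :=
  A.filter fun p => IsKept Vb0 A E p.1 ∧ Alive Vb0 A p.2

theorem mem_aliveEdges {e : β × β} :
    e ∈ aliveEdges Vb0 A E ↔ e ∈ E ∧ Alive Vb0 A e.1 ∧ Alive Vb0 A e.2 := by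
  classical
  unfold aliveEdges
  exact mem_filter

theorem mem_keptArcs {p : β × β} :
    p ∈ keptArcs Vb0 A E ↔ p ∈ A ∧ IsKept Vb0 A E p.1 ∧ Alive Vb0 A p.2 := by
  classical
  unfold keptArcs
  exact mem_filter

theorem Alive.of_reflTransGen {v w : β} (h : ReflTransGen (ArcRel A) v w)
    (hw : Alive Vb0 A w) : Alive Vb0 A v :=
  hw.mono (cluster_subset_of_reflTransGen h)

theorem alive_of_mem {v : β} (hv : v ∈ Vb0) : Alive Vb0 A v := ⟨v, hv, .refl⟩

theorem isKept_of_mem {v : β} (hv : v ∈ Vb0) : IsKept Vb0 A E v :=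
  ⟨alive_of_mem hv, v, .inl hv, .refl⟩

theorem isKept_of_mem_aliveEdges {e : β × β} (he : e ∈ aliveEdges Vb0 A E) :
    IsKept Vb0 A E e.1 ∧ IsKept Vb0 A E e.2 := by
  have hal := (mem_aliveEdges.1 he).2
  exact ⟨⟨hal.1, e.1, .inr ⟨e, he, .inl rfl⟩, .refl⟩, ⟨hal.2, e.2, .inr ⟨e, he, .inr rfl⟩, .refl⟩⟩

theorem IsKept.of_reflTransGen {v w : β} (hv : IsKept Vb0 A E v)
    (h : ReflTransGen (ArcRel A) v w) (hw : Alive Vb0 A w) : IsKept Vb0 A E w :=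
  let ⟨_, s, hs, hsv⟩ := hv
  ⟨hw, s, hs, hsv.trans h⟩

theorem IsKept.reflTransGen_keptArcs {v w : β} (hv : IsKept Vb0 A E v)
    (h : ReflTransGen (ArcRel A) v w) (hw : Alive Vb0 A w) :
    ReflTransGen (ArcRel (keptArcs Vb0 A E)) v w := by
  induction h with
  | refl => exact .refl
  | @tail b c hvb hbc ih =>
    have hb : Alive Vb0 A b := hw.of_reflTransGen (.single hbc)
    exact (ih hb).tail (mem_keptArcs.2 ⟨hbc, hv.of_reflTransGen hvb hb, hw⟩)

theorem IsKept.cluster_keptArcs {v : β} (hv : IsKept Vb0 A E v) :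
    Cluster Vb0 (keptArcs Vb0 A E) v = Cluster Vb0 A v := by
  ext u
  refine ⟨fun hu => ⟨hu.1, ReflTransGen.mono (fun x y h => (mem_keptArcs.1 h).1) _ _ hu.2⟩,
    fun hu => ⟨hu.1, ?_⟩⟩
  exact hv.reflTransGen_keptArcs hu.2 (alive_of_mem hu.1)

theorem IsDagCompression.exists_aliveEdges_iff {Vbar V : Finset β} {Ebar : Finset (β × β)}
    (hD : IsDagCompression Vbar Ebar V A E) (hsub : Vb0 ⊆ Vbar) {x y : β} :
    (∃ e ∈ aliveEdges Vb0 A E, x ∈ Cluster Vb0 (keptArcs Vb0 A E) e.1 ∧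
      y ∈ Cluster Vb0 (keptArcs Vb0 A E) e.2) ↔ (x, y) ∈ Ebar ∧ x ∈ Vb0 ∧ y ∈ Vb0 := by
  constructor
  · rintro ⟨e, he, hx, hy⟩
    rw [(isKept_of_mem_aliveEdges he).1.cluster_keptArcs] at hx
    rw [(isKept_of_mem_aliveEdges he).2.cluster_keptArcs] at hy
    exact ⟨hD.mem_of_mem_cluster (mem_aliveEdges.1 he).1
      (cluster_mono hsub A _ hx) (cluster_mono hsub A _ hy), hx.1, hy.1⟩
  · rintro ⟨hxy, hx, hy⟩
    obtain ⟨e, he, hxe, hye⟩ := hD.exists_of_mem hxy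
    have he0 : e ∈ aliveEdges Vb0 A E := mem_aliveEdges.2 ⟨he, ⟨x, hx, hxe.2⟩, ⟨y, hy, hye.2⟩⟩
    refine ⟨e, he0, ?_, ?_⟩
    · rw [(isKept_of_mem_aliveEdges he0).1.cluster_keptArcs]
      exact ⟨hx, hxe.2⟩
    · rw [(isKept_of_mem_aliveEdges he0).2.cluster_keptArcs]
      exact ⟨hy, hye.2⟩

open scoped Classical in
theorem IsDagCompression.restrict {Vbar V : Finset β} {Ebar : Finset (β × β)}
    (hD : IsDagCompression Vbar Ebar V A E) (hsub : Vb0 ⊆ Vbar) :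
    IsDagCompression Vb0 (Ebar.filter fun e => e.1 ∈ Vb0 ∧ e.2 ∈ Vb0)
      (V.filter (IsKept Vb0 A E)) (keptArcs Vb0 A E) (aliveEdges Vb0 A E) := by
  have hkA : keptArcs Vb0 A E ⊆ A := fun p hp => (mem_keptArcs.1 hp).1
  refine ⟨fun v hv => mem_filter.2 ⟨hD.vbar_subset (hsub hv), isKept_of_mem hv⟩, ?_,
    fun v h => hD.acyclic v (TransGen.mono (fun x y hxy => hkA hxy) _ _ h), ?_, ?_,
    coe_eq_biUnion_cluster fun x y => by rw [hD.exists_aliveEdges_iff hsub, mem_filter]⟩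
  · intro p hp
    obtain ⟨hpA, hk, hal⟩ := mem_keptArcs.1 hp
    obtain ⟨h1, h2⟩ := mem_product.1 (hD.arcs_subset hpA)
    exact mem_product.2 ⟨mem_filter.2 ⟨h1, hk⟩,
      mem_filter.2 ⟨h2, hk.of_reflTransGen (.single hpA) hal⟩⟩
  · intro v hv
    have hk := (mem_filter.1 hv).2
    refine ⟨fun hout => ?_, fun hv0 u hu => hD.notMem_arcs (hsub hv0) u (hkA hu)⟩
    obtain ⟨u, hu, hvu⟩ := hk.1
    rcases hvu.cases_head with rfl | ⟨c, hvc, hcu⟩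
    · exact hu
    · exact absurd (mem_keptArcs.2 ⟨hvc, hk, (alive_of_mem hu).of_reflTransGen hcu⟩) (hout c)
  · intro e he
    obtain ⟨h1, h2⟩ := mem_product.1 (hD.edges_subset (mem_aliveEdges.1 he).1)
    exact mem_product.2 ⟨mem_filter.2 ⟨h1, (isKept_of_mem_aliveEdges he).1⟩,
      mem_filter.2 ⟨h2, (isKept_of_mem_aliveEdges he).2⟩⟩

end Restrict

section Excision

open scoped Classical

variable {α : Type*} [DecidableEq α]

def IsCoveredBy (G : Finset (Finset α)) (Vb : Finset (TigVertex α))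
    (A : Finset (TigVertex α × TigVertex α)) (v : TigVertex α) : Prop :=
  ∃ g ∈ G, Cluster Vb A v ⊆ Sum.inl '' (g : Set α)

def IsScattered (G : Finset (Finset α)) (Vb Vb0 : Finset (TigVertex α))
    (A : Finset (TigVertex α × TigVertex α)) (v : TigVertex α) : Prop :=
  Alive Vb0 A v ∧ Cluster Vb A v ⊆ Set.range Sum.inl ∧ ¬ IsCoveredBy G Vb A v

variable {U M : Finset α} {F G : Finset (Finset α)} {V : Finset (TigVertex α)}
  {A E : Finset (TigVertex α × TigVertex α)}

theorem not_alive_inr (hD : IsDagCompression (tigV U (insert M F)) (tigE (insert M F)) V A E)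
    (hM : M ∉ F) (b : Bool) : ¬ Alive (tigV U F) A (Sum.inr (M, b)) := by
  rintro ⟨u, hu, hMu⟩
  rw [hD.eq_of_reflTransGen (by simp) hMu] at hu
  exact hM (inr_mem_tigV.1 hu)

theorem exists_serving_edge
    (hD : IsDagCompression (tigV U (insert M F)) (tigE (insert M F)) V A E) (b : Bool)
    {j : α} (hj : j ∈ M) : ∃ e ∈ E, ReflTransGen (ArcRel A) e.1 (Sum.inr (M, b)) ∧
      Sum.inl j ∈ Cluster (tigV U (insert M F)) A e.2 := by
  obtain ⟨e, he, h1, h2⟩ := hD.exists_of_mem (x := Sum.inr (M, b)) (y := Sum.inl j) (by simp [hj])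
  exact ⟨e, he, h1.2, h2⟩

theorem IsScattered.not_isKept
    (hD : IsDagCompression (tigV U (insert M F)) (tigE (insert M F)) V A E)
    (hcovS : ∀ S ∈ F, ∃ g ∈ G, S ⊆ g) (hUG : ∀ j ∈ U, ∃ g ∈ G, j ∈ g) {v : TigVertex α}
    (hv : IsScattered G (tigV U (insert M F)) (tigV U F) A v) : ¬ IsKept (tigV U F) A E v := by
  have hsub : tigV U F ⊆ tigV U (insert M F) := tigV_mono (subset_insert _ _)
  rintro ⟨-, s, hs, hsv⟩
  obtain ⟨⟨u, hu⟩, hinl, hnc⟩ := hv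
  have hvs := cluster_subset_of_reflTransGen (Vb := tigV U (insert M F)) hsv
  rcases hs with hs | ⟨e, he, rfl | rfl⟩
  · obtain rfl := hD.eq_of_reflTransGen (hsub hs) hsv
    rcases v with j | ⟨S, b⟩
    · obtain ⟨g, hg, hjg⟩ := hUG j (by simpa using hs)
      exact hnc ⟨g, hg, by simpa [hD.cluster_of_mem (hsub hs)] using hjg⟩
    · obtain ⟨i, hi⟩ := hinl (hD.cluster_of_mem (hsub hs) ▸ rfl : Sum.inr (S, b) ∈ _)
      cases hi
  · obtain ⟨he, -, w, hw⟩ := mem_aliveEdges.1 he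
    obtain ⟨i, rfl⟩ := hinl (cluster_mono hsub A v hu)
    exact hD.inl_notMem_cluster he (cluster_mono hsub A _ hw) i (hvs (cluster_mono hsub A v hu))
  · obtain ⟨he, ⟨x, hx⟩, -⟩ := mem_aliveEdges.1 he
    rcases x with i | ⟨S, b⟩
    · exact hD.inl_notMem_cluster he (hvs (cluster_mono hsub A v hu)) i (cluster_mono hsub A _ hx)
    obtain ⟨g, hg, hSg⟩ := hcovS S (inr_mem_tigV.1 hx.1)
    refine hnc ⟨g, hg, fun w hw => ?_⟩
    obtain ⟨j, hj, rfl⟩ := hD.exists_eq_inl_of_mem_cluster he (cluster_mono hsub A _ hx) (hvs hw)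
    exact ⟨j, hSg hj, rfl⟩

noncomputable def deadSourceEdges (Vb0 : Finset (TigVertex α))
    (A E : Finset (TigVertex α × TigVertex α)) : Finset (TigVertex α × TigVertex α) :=
  E.filter fun e => ¬ Alive Vb0 A e.1

noncomputable def deadTargetArcs (Vb0 : Finset (TigVertex α))
    (A : Finset (TigVertex α × TigVertex α)) : Finset (TigVertex α × TigVertex α) :=
  A.filter fun p => ¬ Alive Vb0 A p.2

noncomputable def scatteredArcs (G : Finset (Finset α)) (Vb Vb0 : Finset (TigVertex α))
    (A : Finset (TigVertex α × TigVertex α)) : Finset (TigVertex α × TigVertex α) :=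
  A.filter fun p => IsScattered G Vb Vb0 A p.1 ∧ Alive Vb0 A p.2

noncomputable def coveredDeadEdges (G : Finset (Finset α)) (Vb Vb0 : Finset (TigVertex α))
    (A E : Finset (TigVertex α × TigVertex α)) (y : TigVertex α) :
    Finset (TigVertex α × TigVertex α) :=
  (deadSourceEdges Vb0 A E).filter fun e =>
    ReflTransGen (ArcRel A) e.1 y ∧ IsCoveredBy G Vb A e.2

noncomputable def frontierArcs (Vb0 : Finset (TigVertex α))
    (A : Finset (TigVertex α × TigVertex α)) (y : TigVertex α) :
    Finset (TigVertex α × TigVertex α) :=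
  (deadTargetArcs Vb0 A).filter fun p => Alive Vb0 A p.1 ∧ ReflTransGen (ArcRel A) p.2 y

theorem exists_mem_frontierArcs
    (hD : IsDagCompression (tigV U (insert M F)) (tigE (insert M F)) V A E) (hM : M ∉ F)
    (b : Bool) {e : TigVertex α × TigVertex α} (he : e ∈ E)
    (hey : ReflTransGen (ArcRel A) e.1 (Sum.inr (M, b))) {j : α}
    (hje : Sum.inl j ∈ Cluster (tigV U (insert M F)) A e.2) (hal : Alive (tigV U F) A e.1) :
    ∃ p ∈ frontierArcs (tigV U F) A (Sum.inr (M, b)),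
      (∃ S ∈ F, ∃ b', Sum.inr (S, b') ∈ Cluster (tigV U (insert M F)) A p.1) ∧
      ∀ S b', Sum.inr (S, b') ∈ Cluster (tigV U (insert M F)) A p.1 → j ∈ S := by
  have hsub : tigV U F ⊆ tigV U (insert M F) := tigV_mono (subset_insert _ _)
  obtain ⟨t, h, hth, hat, hah, het, hhy⟩ := hey.exists_crossing hal (not_alive_inr hD hM b)
  refine ⟨(t, h), mem_filter.2 ⟨mem_filter.2 ⟨hth, hah⟩, hat, hhy⟩, ?_, fun S b' hS => ?_⟩
  · obtain ⟨i | ⟨S, b'⟩, hu⟩ := hat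
    · exact (hD.inl_notMem_cluster he hje i
        (cluster_subset_of_reflTransGen het (cluster_mono hsub A _ hu))).elim
    · exact ⟨S, inr_mem_tigV.1 hu.1, b', cluster_mono hsub A _ hu⟩
  · obtain ⟨j', hj', hjj'⟩ :=
      hD.exists_eq_inl_of_mem_cluster he (cluster_subset_of_reflTransGen het hS) hje
    exact Sum.inl_injective hjj' ▸ hj'

theorem exists_mem_scatteredArcs
    (hD : IsDagCompression (tigV U (insert M F)) (tigE (insert M F)) V A E) (hMU : M ⊆ U)
    (hUG : ∀ j ∈ U, ∃ g ∈ G, j ∈ g) (b : Bool) {e : TigVertex α × TigVertex α} (he : e ∈ E)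
    (hey : ReflTransGen (ArcRel A) e.1 (Sum.inr (M, b))) {j : α} (hj : j ∈ M)
    (hje : Sum.inl j ∈ Cluster (tigV U (insert M F)) A e.2)
    (hcov : ¬ IsCoveredBy G (tigV U (insert M F)) A e.2) :
    ∃ p ∈ scatteredArcs G (tigV U (insert M F)) (tigV U F) A,
      IsCoveredBy G (tigV U (insert M F)) A p.2 ∧
      Sum.inl j ∈ Cluster (tigV U (insert M F)) A p.2 := by
  have hsub : tigV U F ⊆ tigV U (insert M F) := tigV_mono (subset_insert _ _)
  have hjU : Sum.inl j ∈ tigV U F := by simpa using hMU hj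
  have hscat : IsScattered G (tigV U (insert M F)) (tigV U F) A e.2 := by
    refine ⟨⟨_, hjU, hje.2⟩, fun w hw => ?_, hcov⟩
    obtain ⟨i, -, rfl⟩ := hD.exists_eq_inl_of_mem_cluster he (b := b) ⟨by simp, hey⟩ hw
    exact ⟨i, rfl⟩
  have hnscat : ¬ IsScattered G (tigV U (insert M F)) (tigV U F) A (Sum.inl j) := by
    obtain ⟨g, hg, hjg⟩ := hUG j (hMU hj)
    refine fun h => h.2.2 ⟨g, hg, ?_⟩
    rw [hD.cluster_of_mem (hsub hjU)]
    simpa using hjg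
  obtain ⟨t, h, hth, hst, hsh, het, hhj⟩ := hje.2.exists_crossing hscat hnscat
  have hah : Alive (tigV U F) A h := ⟨_, hjU, hhj⟩
  refine ⟨(t, h), mem_filter.2 ⟨hth, hst, hah⟩, ?_, hsub hjU, hhj⟩
  by_contra hnc
  exact hsh ⟨hah, (cluster_subset_of_reflTransGen (het.tail hth)).trans hscat.2.1, hnc⟩

/-- Each `j ∈ M` is joined to the twin by an edge `e`. If the source of `e` is alive, the path
down to the twin leaves the alive region through a frontier arc; otherwise `e` is covered, or
the path from its target down to `inl j` leaves the scattered region through a scattered arc. -/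
theorem exists_cover_card_le
    (hD : IsDagCompression (tigV U (insert M F)) (tigE (insert M F)) V A E) (hM : M ∉ F)
    (hMU : M ⊆ U) (hcovS : ∀ S ∈ F, ∃ g ∈ G, S ⊆ g) (hUG : ∀ j ∈ U, ∃ g ∈ G, j ∈ g)
    (b : Bool) :
    ∃ X ⊆ G, M ⊆ X.sup id ∧ X.card ≤
      (coveredDeadEdges G (tigV U (insert M F)) (tigV U F) A E (Sum.inr (M, b))).card +
      (frontierArcs (tigV U F) A (Sum.inr (M, b))).card +
      (scatteredArcs G (tigV U (insert M F)) (tigV U F) A).card := by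
  set Vb := tigV U (insert M F)
  set Vb0 := tigV U F
  set I := (coveredDeadEdges G Vb Vb0 A E (Sum.inr (M, b)) ∪ scatteredArcs G Vb Vb0 A).disjSum
      (frontierArcs Vb0 A (Sum.inr (M, b)))
  set P : (TigVertex α × TigVertex α) ⊕ (TigVertex α × TigVertex α) → Finset α → Prop :=
    Sum.elim (fun p g => Cluster Vb A p.2 ⊆ Sum.inl '' ↑g)
      (fun p g => ∃ S ⊆ g, ∃ b', Sum.inr (S, b') ∈ Cluster Vb A p.1)
  suffices h : ∀ j ∈ M, ∃ i ∈ I, (∃ g ∈ G, P i g) ∧ ∀ g, P i g → j ∈ g by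
    obtain ⟨X, hXG, hMX, hX⟩ := exists_subset_sup_card_le I G P h
    refine ⟨X, hXG, hMX, hX.trans ?_⟩
    have := card_union_le (coveredDeadEdges G Vb Vb0 A E (Sum.inr (M, b)))
      (scatteredArcs G Vb Vb0 A)
    rw [card_disjSum]
    omega
  intro j hj
  have hjC : ∀ {v : TigVertex α} {g : Finset α}, Sum.inl j ∈ Cluster Vb A v →
      Cluster Vb A v ⊆ Sum.inl '' ↑g → j ∈ g :=
    fun hv hvg => Sum.inl_injective.mem_set_image.1 (hvg hv)
  obtain ⟨e, he, hey, hje⟩ := exists_serving_edge hD b hj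
  by_cases hal : Alive Vb0 A e.1
  · obtain ⟨q, hq, ⟨S, hS, b', hSq⟩, hall⟩ := exists_mem_frontierArcs hD hM b he hey hje hal
    obtain ⟨g, hg, hSg⟩ := hcovS S hS
    exact ⟨.inr q, inr_mem_disjSum.2 hq, ⟨g, hg, S, hSg, b', hSq⟩,
      fun g ⟨S', hS'g, b'', h⟩ => hS'g (hall S' b'' h)⟩
  by_cases hcov : IsCoveredBy G Vb A e.2
  · exact ⟨.inl e, inl_mem_disjSum.2 (mem_union_left _
      (mem_filter.2 ⟨mem_filter.2 ⟨he, hal⟩, hey, hcov⟩)), hcov, fun g hg => hjC hje hg⟩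
  obtain ⟨q, hq, hcovq, hjq⟩ := exists_mem_scatteredArcs hD hMU hUG b he hey hj hje hcov
  exact ⟨.inl q, inl_mem_disjSum.2 (mem_union_right _ hq), hcovq, fun g hg => hjC hjq hg⟩

/-- Arcs into the twin `Sum.inr (M, !b)` and edges out of it are dead and not charged to the twin
`Sum.inr (M, b)`; neither are arcs into the latter with a dead tail and edges out of it with an
uncovered target. -/
theorem card_coveredDeadEdges_add_card_frontierArcs_add_le
    (hD : IsDagCompression (tigV U (insert M F)) (tigE (insert M F)) V A E) (hM : M ∉ F)
    (b : Bool) {tE tA : Finset (TigVertex α × TigVertex α)}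
    (htE : ∀ e ∈ tE, e ∈ E ∧ e.1 = Sum.inr (M, b) ∧
      ¬ IsCoveredBy G (tigV U (insert M F)) A e.2)
    (htA : ∀ p ∈ tA, p ∈ A ∧ p.2 = Sum.inr (M, b) ∧ ¬ Alive (tigV U F) A p.1) :
    (coveredDeadEdges G (tigV U (insert M F)) (tigV U F) A E (Sum.inr (M, b))).card +
      (frontierArcs (tigV U F) A (Sum.inr (M, b))).card +
      (tE.card + (E.filter (·.1 = Sum.inr (M, !b))).card) +
      (tA.card + (A.filter (·.2 = Sum.inr (M, !b))).card) ≤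
      (deadSourceEdges (tigV U F) A E).card + (deadTargetArcs (tigV U F) A).card := by
  have hyz : ∀ {w}, ReflTransGen (ArcRel A) (Sum.inr (M, !b)) w → w ≠ Sum.inr (M, b) :=
    fun h hw => by simpa [hw] using hD.eq_of_reflTransGen (by simp) h
  have hE : (coveredDeadEdges G (tigV U (insert M F)) (tigV U F) A E (Sum.inr (M, b))).card +
      (tE ∪ E.filter (·.1 = Sum.inr (M, !b))).card ≤ (deadSourceEdges (tigV U F) A E).card := by
    refine card_filter_add_card_le (fun e he => ?_) fun e he => ?_ <;>
      rcases mem_union.1 he with he | he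
    · obtain ⟨he, h1, -⟩ := htE e he
      exact mem_filter.2 ⟨he, h1 ▸ not_alive_inr hD hM b⟩
    · obtain ⟨he, h1⟩ := mem_filter.1 he
      exact mem_filter.2 ⟨he, h1 ▸ not_alive_inr hD hM _⟩
    · exact fun h => (htE e he).2.2 h.2
    · exact fun h => hyz ((mem_filter.1 he).2 ▸ h.1) rfl
  have hA : (frontierArcs (tigV U F) A (Sum.inr (M, b))).card +
      (tA ∪ A.filter (·.2 = Sum.inr (M, !b))).card ≤ (deadTargetArcs (tigV U F) A).card := by
    refine card_filter_add_card_le (fun p hp => ?_) fun p hp => ?_ <;>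
      rcases mem_union.1 hp with hp | hp
    · obtain ⟨hp, h2, -⟩ := htA p hp
      exact mem_filter.2 ⟨hp, h2 ▸ not_alive_inr hD hM b⟩
    · obtain ⟨hp, h2⟩ := mem_filter.1 hp
      exact mem_filter.2 ⟨hp, h2 ▸ not_alive_inr hD hM _⟩
    · exact fun h => (htA p hp).2.2 h.1
    · exact fun h => hyz ((mem_filter.1 hp).2 ▸ h.2) rfl
  rw [card_union_of_disjoint (disjoint_left.2 fun e he he' => by
    simpa [(mem_filter.1 he').2] using (htE e he).2.1)] at hE
  rw [card_union_of_disjoint (disjoint_left.2 fun p hp hp' => by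
    simpa [(mem_filter.1 hp').2] using (htA p hp).2.1)] at hA
  omega

theorem filter_snd_nonempty_or_filter_fst_nonempty
    (hD : IsDagCompression (tigV U (insert M F)) (tigE (insert M F)) V A E) (hMne : M.Nonempty)
    (b : Bool) :
    (A.filter (·.2 = Sum.inr (M, b))).Nonempty ∨ (E.filter (·.1 = Sum.inr (M, b))).Nonempty := by
  obtain ⟨j, hj⟩ := hMne
  obtain ⟨e, he, hey, -⟩ := exists_serving_edge hD b hj
  rcases hey.cases_tail with h | ⟨t, -, hty⟩
  · exact .inr ⟨e, mem_filter.2 ⟨he, h.symm⟩⟩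
  · exact .inl ⟨_, mem_filter.2 ⟨hty, rfl⟩⟩

/-- If the only way into a twin of `M` is a single edge, that edge serves all of `M`. -/
theorem not_isCoveredBy_of_filter_eq_singleton
    (hD : IsDagCompression (tigV U (insert M F)) (tigE (insert M F)) V A E)
    (hnoG : ∀ g ∈ G, ¬ M ⊆ g) (b : Bool) (hin : A.filter (·.2 = Sum.inr (M, b)) = ∅)
    {e : TigVertex α × TigVertex α} (hout : E.filter (·.1 = Sum.inr (M, b)) = {e}) :
    ¬ IsCoveredBy G (tigV U (insert M F)) A e.2 := by
  rintro ⟨g, hg, hcov⟩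
  refine hnoG g hg fun j hj => ?_
  obtain ⟨e', he', hey, hje⟩ := exists_serving_edge hD b hj
  rcases hey.cases_tail with h | ⟨t, -, hty⟩
  · have he'e : e' ∈ E.filter (·.1 = Sum.inr (M, b)) := mem_filter.2 ⟨he', h.symm⟩
    rw [hout, mem_singleton] at he'e
    exact Sum.inl_injective.mem_set_image.1 (hcov (he'e ▸ hje))
  · have : (t, Sum.inr (M, b)) ∈ A.filter (·.2 = Sum.inr (M, b)) := mem_filter.2 ⟨hty, rfl⟩
    rw [hin] at this
    exact absurd this (notMem_empty _)

/-- Otherwise the twin of a member of `F` below that tail would be joined to all of `M`. -/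
theorem not_alive_of_filter_eq_singleton
    (hD : IsDagCompression (tigV U (insert M F)) (tigE (insert M F)) V A E) (hMne : M.Nonempty)
    (hcovS : ∀ S ∈ F, ∃ g ∈ G, S ⊆ g) (hnoG : ∀ g ∈ G, ¬ M ⊆ g) (b : Bool)
    (hout : E.filter (·.1 = Sum.inr (M, b)) = ∅) {p : TigVertex α × TigVertex α}
    (hin : A.filter (·.2 = Sum.inr (M, b)) = {p}) : ¬ Alive (tigV U F) A p.1 := by
  have hserve : ∀ j ∈ M, ∃ e ∈ E, ReflTransGen (ArcRel A) e.1 p.1 ∧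
      Sum.inl j ∈ Cluster (tigV U (insert M F)) A e.2 := by
    intro j hj
    obtain ⟨e, he, hey, hje⟩ := exists_serving_edge hD b hj
    rcases hey.cases_tail with h | ⟨t, het, hty⟩
    · have : e ∈ E.filter (·.1 = Sum.inr (M, b)) := mem_filter.2 ⟨he, h.symm⟩
      rw [hout] at this
      exact absurd this (notMem_empty _)
    · have htp : (t, Sum.inr (M, b)) ∈ A.filter (·.2 = Sum.inr (M, b)) :=
        mem_filter.2 ⟨hty, rfl⟩
      rw [hin, mem_singleton] at htp
      exact ⟨e, he, htp ▸ het, hje⟩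
  have hsub : tigV U F ⊆ tigV U (insert M F) := tigV_mono (subset_insert _ _)
  rintro ⟨i | ⟨S, b'⟩, hu, hpu⟩
  · obtain ⟨j, hj⟩ := hMne
    obtain ⟨e, he, hep, hje⟩ := hserve j hj
    exact hD.inl_notMem_cluster he hje i ⟨hsub hu, hep.trans hpu⟩
  · obtain ⟨g, hg, hSg⟩ := hcovS S (inr_mem_tigV.1 hu)
    refine hnoG g hg fun j hj => hSg ?_
    obtain ⟨e, he, hep, hje⟩ := hserve j hj
    obtain ⟨j', hj', h⟩ := hD.exists_eq_inl_of_mem_cluster he ⟨hsub hu, hep.trans hpu⟩ hje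
    exact Sum.inl_injective h ▸ hj'

theorem card_coveredDeadEdges_add_card_frontierArcs_add_two_le
    (hD : IsDagCompression (tigV U (insert M F)) (tigE (insert M F)) V A E) (hM : M ∉ F)
    (hMne : M.Nonempty) (hcovS : ∀ S ∈ F, ∃ g ∈ G, S ⊆ g) (hnoG : ∀ g ∈ G, ¬ M ⊆ g) (b : Bool)
    (hb : (E.filter (·.1 = Sum.inr (M, b))).card + (A.filter (·.2 = Sum.inr (M, b))).card = 1)
    (hb' : 1 ≤ (E.filter (·.1 = Sum.inr (M, !b))).card +
      (A.filter (·.2 = Sum.inr (M, !b))).card) :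
    (coveredDeadEdges G (tigV U (insert M F)) (tigV U F) A E (Sum.inr (M, b))).card +
      (frontierArcs (tigV U F) A (Sum.inr (M, b))).card + 2 ≤
      (deadSourceEdges (tigV U F) A E).card + (deadTargetArcs (tigV U F) A).card := by
  by_cases hout : (E.filter (·.1 = Sum.inr (M, b))).card = 1
  · obtain ⟨e, he⟩ := card_eq_one.1 hout
    have hin : A.filter (·.2 = Sum.inr (M, b)) = ∅ := card_eq_zero.1 (by omega)
    have hemem := mem_filter.1 (he ▸ mem_singleton_self e : e ∈ E.filter (·.1 = Sum.inr (M, b)))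
    have := card_coveredDeadEdges_add_card_frontierArcs_add_le (G := G) hD hM b
      (tE := {e}) (tA := ∅)
      (fun e' he' => mem_singleton.1 he' ▸
        ⟨hemem.1, hemem.2, not_isCoveredBy_of_filter_eq_singleton hD hnoG b hin he⟩) (by simp)
    simp only [card_singleton, card_empty] at this
    omega
  · have hout : E.filter (·.1 = Sum.inr (M, b)) = ∅ := card_eq_zero.1 (by omega)
    obtain ⟨p, hp⟩ := card_eq_one.1 (by omega : (A.filter (·.2 = Sum.inr (M, b))).card = 1)
    have hpmem := mem_filter.1 (hp ▸ mem_singleton_self p : p ∈ A.filter (·.2 = Sum.inr (M, b)))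
    have := card_coveredDeadEdges_add_card_frontierArcs_add_le (G := G) hD hM b
      (tE := ∅) (tA := {p}) (by simp)
      (fun p' hp' => mem_singleton.1 hp' ▸
        ⟨hpmem.1, hpmem.2, not_alive_of_filter_eq_singleton hD hMne hcovS hnoG b hout hp⟩)
    simp only [card_singleton, card_empty] at this
    omega

theorem exists_card_coveredDeadEdges_add_card_frontierArcs_add_two_le
    (hD : IsDagCompression (tigV U (insert M F)) (tigE (insert M F)) V A E) (hM : M ∉ F)
    (hMne : M.Nonempty) (hcovS : ∀ S ∈ F, ∃ g ∈ G, S ⊆ g) (hnoG : ∀ g ∈ G, ¬ M ⊆ g) :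
    ∃ b : Bool,
      (coveredDeadEdges G (tigV U (insert M F)) (tigV U F) A E (Sum.inr (M, b))).card +
        (frontierArcs (tigV U F) A (Sum.inr (M, b))).card + 2 ≤
        (deadSourceEdges (tigV U F) A E).card + (deadTargetArcs (tigV U F) A).card := by
  have hfree := fun b => card_coveredDeadEdges_add_card_frontierArcs_add_le (G := G) hD hM b
    (tE := ∅) (tA := ∅) (by simp) (by simp)
  have hpos : ∀ b, 1 ≤ (E.filter (·.1 = Sum.inr (M, b))).card +
      (A.filter (·.2 = Sum.inr (M, b))).card := fun b => by
    have := filter_snd_nonempty_or_filter_fst_nonempty hD hMne b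
    rw [← card_pos, ← card_pos] at this
    omega
  simp only [card_empty, zero_add] at hfree
  by_cases htrue : 2 ≤ (E.filter (·.1 = Sum.inr (M, true))).card +
      (A.filter (·.2 = Sum.inr (M, true))).card
  · exact ⟨false, by have := hfree false; rw [Bool.not_false] at this; omega⟩
  by_cases hfalse : 2 ≤ (E.filter (·.1 = Sum.inr (M, false))).card +
      (A.filter (·.2 = Sum.inr (M, false))).card
  · exact ⟨true, by have := hfree true; rw [Bool.not_true] at this; omega⟩
  exact ⟨false, card_coveredDeadEdges_add_card_frontierArcs_add_two_le hD hM hMne hcovS hnoG false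
    (by have := hpos false; omega) (hpos true)⟩

theorem IsDagCompression.exists_excise
    (hD : IsDagCompression (tigV U (insert M F)) (tigE (insert M F)) V A E) (hM : M ∉ F)
    (hMne : M.Nonempty) (hMU : M ⊆ U) (hFU : ∀ S ∈ F, S ⊆ U)
    (hcovS : ∀ S ∈ F, ∃ g ∈ G, S ⊆ g) (hnoG : ∀ g ∈ G, ¬ M ⊆ g)
    (hUG : ∀ j ∈ U, ∃ g ∈ G, j ∈ g) :
    ∃ (V₀ : Finset (TigVertex α)) (A₀ E₀ : Finset (TigVertex α × TigVertex α))
      (X : Finset (Finset α)), IsDagCompression (tigV U F) (tigE F) V₀ A₀ E₀ ∧ X ⊆ G ∧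
      M ⊆ X.sup id ∧ A₀.card + E₀.card + X.card + 2 ≤ A.card + E.card := by
  have hsub : tigV U F ⊆ tigV U (insert M F) := tigV_mono (subset_insert _ _)
  obtain ⟨b, hspare⟩ :=
    exists_card_coveredDeadEdges_add_card_frontierArcs_add_two_le hD hM hMne hcovS hnoG
  obtain ⟨X, hXG, hMX, hX⟩ := exists_cover_card_le hD hM hMU hcovS hUG b
  refine ⟨_, _, _, X, tigE_eq_filter hFU ▸ hD.restrict hsub, hXG, hMX, ?_⟩
  have hE : (aliveEdges (tigV U F) A E).card + (deadSourceEdges (tigV U F) A E).card ≤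
      E.card :=
    card_filter_add_card_le (filter_subset _ _) fun e he h => (mem_filter.1 he).2 h.1
  have hdisj : Disjoint (deadTargetArcs (tigV U F) A)
      (scatteredArcs G (tigV U (insert M F)) (tigV U F) A) :=
    disjoint_left.2 fun p hp hp' => (mem_filter.1 hp).2 (mem_filter.1 hp').2.2
  have hA : (keptArcs (tigV U F) A E).card + (deadTargetArcs (tigV U F) A ∪
      scatteredArcs G (tigV U (insert M F)) (tigV U F) A).card ≤ A.card := by
    refine card_filter_add_card_le (union_subset (filter_subset _ _) (filter_subset _ _))
      fun p hp h => ?_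
    rcases mem_union.1 hp with hp | hp
    · exact (mem_filter.1 hp).2 h.2
    · exact (mem_filter.1 hp).2.1.not_isKept hD hcovS hUG h.1
  rw [card_union_of_disjoint hdisj] at hA
  omega

end Excision

section LowerBound

variable {α : Type*} [DecidableEq α]

/-- Excising a largest non-singleton set costs at least four: its two twins and a cover of it
by at least two smaller sets. -/
theorem two_mul_card_add_le_of_isDagCompression {U : Finset α} {F : Finset (Finset α)}
    (hne : ∀ S ∈ F, S.Nonempty) (hFU : ∀ S ∈ F, S ⊆ U) (hsing : ∀ j ∈ U, {j} ∈ F)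
    {V : Finset (TigVertex α)} {A E : Finset (TigVertex α × TigVertex α)}
    (hD : IsDagCompression (tigV U F) (tigE F) V A E) :
    2 * F.card + 2 * (F.filter fun S => 2 ≤ S.card).card ≤ A.card + E.card := by
  induction F using Finset.strongInduction generalizing V A E with
  | H F ih =>
  by_cases hF2 : (F.filter fun S => 2 ≤ S.card) = ∅
  · rw [hF2, card_empty]
    simpa using two_mul_card_le_of_isDagCompression hne hD
  obtain ⟨M, hMf, hMmax⟩ :=
    exists_max_image (F.filter fun S => 2 ≤ S.card) card (nonempty_iff_ne_empty.2 hF2)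
  obtain ⟨hMF, hM2⟩ := mem_filter.1 hMf
  have hMne : M.Nonempty := card_pos.1 (by omega)
  have hnoG : ∀ g ∈ F.erase M, ¬ M ⊆ g := fun g hg hMg =>
    (mem_erase.1 hg).1 (eq_of_subset_of_card_le hMg
      (hMmax g (mem_filter.2 ⟨mem_of_mem_erase hg, hM2.trans (card_le_card hMg)⟩))).symm
  have hsing' : ∀ j ∈ U, {j} ∈ F.erase M :=
    fun j hj => mem_erase.2 ⟨fun h => by simp [← h] at hM2, hsing j hj⟩
  rw [← insert_erase hMF] at hD
  obtain ⟨V₀, A₀, E₀, X, hD₀, hXG, hMX, hsize⟩ := hD.exists_excise (notMem_erase M F) hMne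
    (hFU M hMF) (fun S hS => hFU S (mem_of_mem_erase hS)) (fun S hS => ⟨S, hS, subset_rfl⟩)
    hnoG (fun j hj => ⟨{j}, hsing' j hj, mem_singleton_self j⟩)
  have hX := two_le_card_of_subset_sup hMne hMX fun g hg => hnoG g (hXG hg)
  have hIH := ih (F.erase M) (erase_ssubset hMF) (fun S hS => hne S (mem_of_mem_erase hS))
    (fun S hS => hFU S (mem_of_mem_erase hS)) hsing' hD₀
  rw [filter_erase, card_erase_of_mem hMf, card_erase_of_mem hMF] at hIH
  have := card_pos.2 ⟨M, hMF⟩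
  have := card_pos.2 ⟨M, hMf⟩
  omega

end LowerBound

section Trie

variable {α : Type*} [DecidableEq α] (o : α) (p : Finset α → α)

/-- A fresh vertex for the set `S`: its label `insert o S` is not a subset of the universe. -/
def trieInner (S : Finset α) : TigVertex α := Sum.inr (insert o S, false)

/-- The vertex of the trie whose cluster is `S`. -/
def trieNode (S : Finset α) : TigVertex α :=
  if 2 ≤ S.card then trieInner o S else Sum.inl (p S)

def trieArcs (U : Finset α) (H X : Finset (Finset α)) : Finset (TigVertex α × TigVertex α) :=
  ((H.filter fun S => 2 ≤ S.card).biUnion fun S =>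
    {(trieInner o S, trieNode o p (S.erase (p S))), (trieInner o S, Sum.inl (p S))}) ∪
  X.image fun S => (trieInner o U, trieNode o p S)

def trieVertices (U : Finset α) (H : Finset (Finset α)) : Finset (TigVertex α) :=
  tigV U (insert U H) ∪ (insert U (H.filter fun S => 2 ≤ S.card)).image (trieInner o)

variable {o p} {U : Finset α} {H X : Finset (Finset α)}

theorem trieInner_inj {S S' : Finset α} (hS : o ∉ S) (hS' : o ∉ S') :
    trieInner o S = trieInner o S' ↔ S = S' := by
  refine ⟨fun h => ?_, fun h => h ▸ rfl⟩
  have h : insert o S = insert o S' := by simpa [trieInner] using h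
  rw [← erase_insert hS, h, erase_insert hS']

theorem trieInner_notMem_tigV (ho : o ∉ U) (hHU : ∀ S ∈ H, S ⊆ U) (S : Finset α) :
    trieInner o S ∉ tigV U (insert U H) := fun h => by
  rcases mem_insert.1 (inr_mem_tigV.1 h) with h | h
  · exact ho (h ▸ mem_insert_self o S)
  · exact ho (hHU _ h (mem_insert_self o S))

theorem trieNode_inj (ho : o ∉ U) (hHU : ∀ S ∈ H, S ⊆ U) (hp : ∀ S ∈ H, p S ∈ S)
    {S S' : Finset α} (hS : S ∈ H) (hS' : S' ∈ H) (h : trieNode o p S = trieNode o p S') :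
    S = S' := by
  by_cases h2 : 2 ≤ S.card <;> by_cases h2' : 2 ≤ S'.card <;>
    simp only [trieNode, h2, h2', if_true, if_false] at h
  · exact (trieInner_inj (fun h => ho (hHU S hS h)) (fun h => ho (hHU S' hS' h))).1 h
  · cases h
  · cases h
  · rw [eq_singleton_of_card_lt_two (hp S hS) h2, eq_singleton_of_card_lt_two (hp S' hS') h2',
      Sum.inl_injective h]

theorem mem_trieArcs {v w : TigVertex α} :
    (v, w) ∈ trieArcs o p U H X ↔
      (∃ S ∈ H, 2 ≤ S.card ∧ v = trieInner o S ∧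
        (w = trieNode o p (S.erase (p S)) ∨ w = Sum.inl (p S))) ∨
      (v = trieInner o U ∧ ∃ S ∈ X, w = trieNode o p S) := by
  simp only [trieArcs, mem_union, mem_biUnion, mem_filter, mem_insert, mem_singleton, mem_image,
    Prod.mk.injEq]
  constructor
  · rintro (⟨S, ⟨hS, h2⟩, ⟨rfl, rfl⟩ | ⟨rfl, rfl⟩⟩ | ⟨S, hS, rfl, rfl⟩)
    exacts [.inl ⟨S, hS, h2, rfl, .inl rfl⟩, .inl ⟨S, hS, h2, rfl, .inr rfl⟩,
      .inr ⟨rfl, S, hS, rfl⟩]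
  · rintro (⟨S, hS, h2, rfl, rfl | rfl⟩ | ⟨rfl, S, hS, rfl⟩)
    exacts [.inl ⟨S, ⟨hS, h2⟩, .inl ⟨rfl, rfl⟩⟩, .inl ⟨S, ⟨hS, h2⟩, .inr ⟨rfl, rfl⟩⟩,
      .inr ⟨S, hS, rfl, rfl⟩]

theorem notMem_trieArcs (ho : o ∉ U) (hHU : ∀ S ∈ H, S ⊆ U) {v : TigVertex α}
    (hv : v ∈ tigV U (insert U H)) (w : TigVertex α) : (v, w) ∉ trieArcs o p U H X := by
  rw [mem_trieArcs]
  rintro (⟨S, -, -, rfl, -⟩ | ⟨rfl, -⟩) <;> exact trieInner_notMem_tigV ho hHU _ hv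

theorem mem_trieArcs_trieInner (ho : o ∉ U) (hHU : ∀ S ∈ H, S ⊆ U) (hUH : U ∉ H) {S : Finset α}
    (hS : S ∈ H) (h2 : 2 ≤ S.card) {w : TigVertex α} :
    (trieInner o S, w) ∈ trieArcs o p U H X ↔
      w ∈ ({trieNode o p (S.erase (p S)), Sum.inl (p S)} : Finset (TigVertex α)) := by
  have hoS : ∀ {S}, S ∈ H → o ∉ S := fun hS h => ho (hHU _ hS h)
  rw [mem_trieArcs, mem_insert, mem_singleton]
  constructor
  · rintro (⟨S', hS', -, h, hw⟩ | ⟨h, -⟩)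
    · rwa [(trieInner_inj (hoS hS) (hoS hS')).1 h]
    · exact absurd ((trieInner_inj (hoS hS) ho).1 h ▸ hS) hUH
  · exact fun hw => .inl ⟨S, hS, h2, rfl, hw⟩

theorem mem_trieArcs_trieInner_self (ho : o ∉ U) (hHU : ∀ S ∈ H, S ⊆ U) (hUH : U ∉ H)
    {w : TigVertex α} :
    (trieInner o U, w) ∈ trieArcs o p U H X ↔ w ∈ X.image (trieNode o p) := by
  rw [mem_trieArcs, mem_image]
  constructor
  · rintro (⟨S, hS, -, h, -⟩ | ⟨-, S, hS, rfl⟩)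
    · exact absurd ((trieInner_inj ho fun h => ho (hHU S hS h)).1 h ▸ hS) hUH
    · exact ⟨S, hS, rfl⟩
  · rintro ⟨S, hS, rfl⟩
    exact .inr ⟨rfl, S, hS, rfl⟩

theorem cluster_trieNode (ho : o ∉ U) (hHU : ∀ S ∈ H, S ⊆ U) (hUH : U ∉ H)
    (hp : ∀ S ∈ H, p S ∈ S ∧ (2 ≤ S.card → S.erase (p S) ∈ H)) {S : Finset α} (hS : S ∈ H) :
    Cluster (tigV U (insert U H)) (trieArcs o p U H X) (trieNode o p S) = Sum.inl '' ↑S := by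
  have hinl : ∀ {x}, x ∈ U →
      Cluster (tigV U (insert U H)) (trieArcs o p U H X) (Sum.inl x) = {Sum.inl x} :=
    fun hx => cluster_eq_singleton (by simpa using hx) (notMem_trieArcs ho hHU (by simpa using hx))
  induction S using Finset.strongInduction with
  | H S ih =>
  obtain ⟨hpS, herase⟩ := hp S hS
  by_cases h2 : 2 ≤ S.card
  · rw [trieNode, if_pos h2, cluster_eq_biUnion (trieInner_notMem_tigV ho hHU S)
      fun w => mem_trieArcs_trieInner ho hHU hUH hS h2, set_biUnion_insert,
      set_biUnion_singleton, ih _ (erase_ssubset hpS) (herase h2), hinl (hHU S hS hpS)]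
    conv_rhs => rw [← insert_erase hpS, coe_insert, Set.image_insert_eq]
    exact Set.union_singleton
  · rw [trieNode, if_neg h2, hinl (hHU S hS hpS)]
    conv_rhs => rw [eq_singleton_of_card_lt_two hpS h2]
    simp

theorem trieNode_erase_ne (hp : ∀ S ∈ H, p S ∈ S ∧ (2 ≤ S.card → S.erase (p S) ∈ H))
    {S : Finset α} (hS : S ∈ H) (h2 : 2 ≤ S.card) :
    trieNode o p (S.erase (p S)) ≠ Sum.inl (p S) := fun h => by
  have hmem := (hp _ ((hp S hS).2 h2)).1
  by_cases h2' : 2 ≤ (S.erase (p S)).card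
  · simp [trieNode, h2', trieInner] at h
  · simp only [trieNode, h2', if_false, Sum.inl.injEq] at h
    exact notMem_erase _ _ (h ▸ hmem)

theorem card_trieArcs (ho : o ∉ U) (hHU : ∀ S ∈ H, S ⊆ U) (hUH : U ∉ H)
    (hp : ∀ S ∈ H, p S ∈ S ∧ (2 ≤ S.card → S.erase (p S) ∈ H)) (hXH : X ⊆ H) :
    (trieArcs o p U H X).card = 2 * (H.filter fun S => 2 ≤ S.card).card + X.card := by
  have hoS : ∀ {S}, S ∈ H → o ∉ S := fun hS h => ho (hHU _ hS h)
  have hfst : ∀ {S : Finset α} {q : TigVertex α × TigVertex α},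
      q ∈ ({(trieInner o S, trieNode o p (S.erase (p S))),
        (trieInner o S, (Sum.inl (p S) : TigVertex α))} : Finset (TigVertex α × TigVertex α)) →
      q.1 = trieInner o S := by
    simp only [mem_insert, mem_singleton]
    rintro S q (rfl | rfl) <;> rfl
  rw [trieArcs, card_union_of_disjoint, card_biUnion,
    sum_congr rfl fun S hS => card_pair fun h =>
      trieNode_erase_ne hp (mem_filter.1 hS).1 (mem_filter.1 hS).2 (Prod.mk.inj h).2,
    sum_const, smul_eq_mul, mul_comm, card_image_of_injOn]
  · exact fun S hS S' hS' h => trieNode_inj ho hHU (fun S hS => (hp S hS).1) (hXH hS) (hXH hS')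
      (Prod.mk.inj h).2
  · intro S hS S' hS' hne
    refine disjoint_left.2 fun q hq hq' => hne ?_
    exact (trieInner_inj (hoS (mem_filter.1 hS).1) (hoS (mem_filter.1 hS').1)).1
      ((hfst hq).symm.trans (hfst hq'))
  · refine disjoint_left.2 fun q hq hq' => ?_
    obtain ⟨S, hS, hqS⟩ := mem_biUnion.1 hq
    obtain ⟨S', -, rfl⟩ := mem_image.1 hq'
    have := (trieInner_inj (hoS (mem_filter.1 hS).1) ho).1 (hfst hqS).symm
    exact hUH (this ▸ (mem_filter.1 hS).1)

theorem trieInner_mem_trieVertices {S : Finset α}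
    (hS : S ∈ insert U (H.filter fun S => 2 ≤ S.card)) : trieInner o S ∈ trieVertices o U H :=
  mem_union_right _ (mem_image_of_mem _ hS)

theorem trieNode_mem_trieVertices (hHU : ∀ S ∈ H, S ⊆ U) (hp : ∀ S ∈ H, p S ∈ S)
    {S : Finset α} (hS : S ∈ H) : trieNode o p S ∈ trieVertices o U H := by
  by_cases h2 : 2 ≤ S.card
  · rw [trieNode, if_pos h2]
    exact trieInner_mem_trieVertices (mem_insert_of_mem (mem_filter.2 ⟨hS, h2⟩))
  · rw [trieNode, if_neg h2]
    exact mem_union_left _ (by simpa using hHU S hS (hp S hS))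

theorem trieArcs_subset (hHU : ∀ S ∈ H, S ⊆ U)
    (hp : ∀ S ∈ H, p S ∈ S ∧ (2 ≤ S.card → S.erase (p S) ∈ H)) (hXH : X ⊆ H) :
    trieArcs o p U H X ⊆ trieVertices o U H ×ˢ trieVertices o U H := by
  have hnode := fun {S} => trieNode_mem_trieVertices (o := o) hHU (fun S hS => (hp S hS).1) (S := S)
  rintro ⟨v, w⟩ h
  rcases mem_trieArcs.1 h with ⟨S, hS, h2, rfl, rfl | rfl⟩ | ⟨rfl, S, hS, rfl⟩
  · exact mem_product.2 ⟨trieInner_mem_trieVertices (mem_insert_of_mem (mem_filter.2 ⟨hS, h2⟩)),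
      hnode ((hp S hS).2 h2)⟩
  · exact mem_product.2 ⟨trieInner_mem_trieVertices (mem_insert_of_mem (mem_filter.2 ⟨hS, h2⟩)),
      mem_union_left _ (by simpa using hHU S hS (hp S hS).1)⟩
  · exact mem_product.2 ⟨trieInner_mem_trieVertices (mem_insert_self _ _), hnode (hXH hS)⟩

/-- The label of a vertex `Sum.inr (Q, b)` is `|Q|`; it drops along every arc. -/
theorem not_transGen_trieArcs (ho : o ∉ U) (hHU : ∀ S ∈ H, S ⊆ U) (hUH : U ∉ H)
    (hp : ∀ S ∈ H, p S ∈ S ∧ (2 ≤ S.card → S.erase (p S) ∈ H)) (hXH : X ⊆ H) (v : TigVertex α) :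
    ¬ TransGen (ArcRel (trieArcs o p U H X)) v v := by
  set f : TigVertex α → ℕ := Sum.elim (fun _ => 0) fun q => q.1.card
  have hinner : ∀ {S}, o ∉ S → f (trieInner o S) = S.card + 1 := fun hS => by
    simp [f, trieInner, card_insert_of_notMem hS]
  have hnode : ∀ {S}, o ∉ S → f (trieNode o p S) ≤ S.card + 1 := fun hS => by
    unfold trieNode
    split_ifs
    · exact (hinner hS).le
    · simp [f]
  have hoS : ∀ {S}, S ∈ H → o ∉ S := fun hS h => ho (hHU _ hS h)
  refine not_transGen_of_rank f (fun ⟨v, w⟩ h => ?_) v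
  rcases mem_trieArcs.1 h with ⟨S, hS, h2, rfl, rfl | rfl⟩ | ⟨rfl, S, hS, rfl⟩
  · have := hnode (hoS ((hp S hS).2 h2))
    rw [card_erase_of_mem (hp S hS).1] at this
    simp only [hinner (hoS hS)]
    omega
  · simp [f, hinner (hoS hS)]
  · have := hnode (hoS (hXH hS))
    have := card_lt_card (ssubset_of_subset_of_ne (hHU S (hXH hS)) fun h => hUH (h ▸ hXH hS))
    simp only [hinner ho]
    omega

theorem forall_notMem_trieArcs_iff (ho : o ∉ U) (hHU : ∀ S ∈ H, S ⊆ U) (hX : X.Nonempty)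
    {v : TigVertex α} (hv : v ∈ trieVertices o U H) :
    (∀ w, (v, w) ∉ trieArcs o p U H X) ↔ v ∈ tigV U (insert U H) := by
  refine ⟨fun hout => ?_, fun hv => notMem_trieArcs ho hHU hv⟩
  rcases mem_union.1 hv with hv | hv
  · exact hv
  obtain ⟨S, hS, rfl⟩ := mem_image.1 hv
  rcases mem_insert.1 hS with rfl | hS
  · obtain ⟨S₀, hS₀⟩ := hX
    exact absurd (mem_trieArcs.2 (.inr ⟨rfl, S₀, hS₀, rfl⟩)) (hout _)
  · obtain ⟨hS, h2⟩ := mem_filter.1 hS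
    exact absurd (mem_trieArcs.2 (.inl ⟨S, hS, h2, rfl, .inr rfl⟩)) (hout _)

theorem cluster_trieInner_self (ho : o ∉ U) (hHU : ∀ S ∈ H, S ⊆ U) (hUH : U ∉ H)
    (hp : ∀ S ∈ H, p S ∈ S ∧ (2 ≤ S.card → S.erase (p S) ∈ H)) (hXH : X ⊆ H)
    (hXU : X.sup id = U) :
    Cluster (tigV U (insert U H)) (trieArcs o p U H X) (trieInner o U) = Sum.inl '' ↑U := by
  rw [cluster_eq_biUnion (trieInner_notMem_tigV ho hHU U)
    fun w => mem_trieArcs_trieInner_self ho hHU hUH]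
  ext u
  simp only [Set.mem_iUnion, mem_image, exists_prop, exists_exists_and_eq_and]
  constructor
  · rintro ⟨S, hS, hu⟩
    rw [cluster_trieNode ho hHU hUH hp (hXH hS)] at hu
    exact Set.image_mono (coe_subset.2 (hHU S (hXH hS))) hu
  · rintro ⟨j, hj, rfl⟩
    obtain ⟨S, hS, hjS⟩ := mem_sup.1 (hXU ▸ hj : j ∈ X.sup id)
    exact ⟨S, hS, by rw [cluster_trieNode ho hHU hUH hp (hXH hS)]; exact ⟨j, hjS, rfl⟩⟩

variable (o p) in
/-- The trie of `H`, plus a vertex for `U` pointing to the members of the cover `X`. -/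
theorem exists_isDagCompression_insert (ho : o ∉ U) (hHU : ∀ S ∈ H, S ⊆ U) (hUH : U ∉ H)
    (hp : ∀ S ∈ H, p S ∈ S ∧ (2 ≤ S.card → S.erase (p S) ∈ H)) (hU : 2 ≤ U.card)
    (hXH : X ⊆ H) (hXU : X.sup id = U) :
    ∃ (V : Finset (TigVertex α)) (A E : Finset (TigVertex α × TigVertex α)),
      IsDagCompression (tigV U (insert U H)) (tigE (insert U H)) V A E ∧
      A.card + E.card = 2 * H.card + 2 * (H.filter fun S => 2 ≤ S.card).card + X.card + 2 := by
  have hUnode : trieNode o p U = trieInner o U := if_pos hU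
  have hne : ∀ S ∈ insert U H, S.Nonempty := forall_mem_insert _ _ _ |>.2
    ⟨card_pos.1 (by omega), fun S hS => ⟨_, (hp S hS).1⟩⟩
  have hX : X.Nonempty := by
    rw [nonempty_iff_ne_empty]
    rintro rfl
    exact (hne _ (mem_insert_self U H)).ne_empty hXU.symm
  have hcl : ∀ S ∈ insert U H, Cluster (tigV U (insert U H)) (trieArcs o p U H X)
      (trieNode o p S) = Sum.inl '' ↑S := forall_mem_insert _ _ _ |>.2
    ⟨hUnode ▸ cluster_trieInner_self ho hHU hUH hp hXH hXU,
      fun S hS => cluster_trieNode ho hHU hUH hp hS⟩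
  have hnode : ∀ S ∈ insert U H, trieNode o p S ∈ trieVertices o U H :=
    forall_mem_insert _ _ _ |>.2 ⟨hUnode ▸ trieInner_mem_trieVertices (mem_insert_self _ _),
      fun S hS => trieNode_mem_trieVertices hHU (fun S hS => (hp S hS).1) hS⟩
  refine ⟨trieVertices o U H, trieArcs o p U H X, _,
    isDagCompression_of_cluster_eq (tigE_subset (forall_mem_insert _ _ _ |>.2 ⟨subset_rfl, hHU⟩))
      subset_union_left (trieArcs_subset hHU hp hXH) (not_transGen_trieArcs ho hHU hUH hp hXH)
      (fun v => forall_notMem_trieArcs_iff ho hHU hX) (Sum.elim Sum.inl fun q => trieNode o p q.1)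
      (fun x hx => ?_) (fun x hx => ?_), ?_⟩
  · obtain ⟨S, hS, b, rfl⟩ := exists_eq_inr_of_mem_image_fst hx
    exact hnode S hS
  · obtain ⟨S, hS, b, rfl⟩ := exists_eq_inr_of_mem_image_fst hx
    rw [Sum.elim_inr, hcl S hS, setOf_inr_mem_tigE hS]
  · rw [card_trieArcs ho hHU hUH hp hXH, card_image_of_injective _ fun x y h => (Prod.mk.inj h).1,
      card_image_fst_tigE hne, card_insert_of_notMem hUH]
    ring

end Trie

section HatCollection

variable {n : ℕ} {T : Finset (Finset ℕ)} {S : Finset ℕ}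

theorem mem_hatCollection : S ∈ hatCollection n T ↔ (∃ j ∈ Icc 1 n, S = {j}) ∨
    (S.Nonempty ∧ ∃ S₁ ∈ T, ∃ i ∈ Icc 1 n, S = S₁ ∩ Icc 1 i) := by
  simp only [hatCollection, mem_union, mem_image, mem_erase, mem_product, Prod.exists,
    nonempty_iff_ne_empty]
  constructor
  · rintro (⟨j, hj, rfl⟩ | ⟨hne, S₁, i, ⟨hS₁, hi⟩, rfl⟩)
    exacts [.inl ⟨j, hj, rfl⟩, .inr ⟨hne, S₁, hS₁, i, hi, rfl⟩]
  · rintro (⟨j, hj, rfl⟩ | ⟨hne, S₁, hS₁, i, hi, rfl⟩)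
    exacts [.inl ⟨j, hj, rfl⟩, .inr ⟨hne, S₁, i, ⟨hS₁, hi⟩, rfl⟩]

theorem nonempty_of_mem_hatCollection (hS : S ∈ hatCollection n T) : S.Nonempty := by
  rcases mem_hatCollection.1 hS with ⟨j, -, rfl⟩ | ⟨hne, -⟩
  exacts [singleton_nonempty j, hne]

theorem subset_of_mem_hatCollection (hT : ∀ S ∈ T, S ⊆ Icc 1 n) (hS : S ∈ hatCollection n T) :
    S ⊆ Icc 1 n := by
  rcases mem_hatCollection.1 hS with ⟨j, hj, rfl⟩ | ⟨-, S₁, hS₁, i, -, rfl⟩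
  exacts [singleton_subset_iff.2 hj, inter_subset_left.trans (hT S₁ hS₁)]

theorem singleton_mem_hatCollection {j : ℕ} (hj : j ∈ Icc 1 n) : {j} ∈ hatCollection n T :=
  mem_hatCollection.2 (.inl ⟨j, hj, rfl⟩)

theorem mem_hatCollection_of_mem (hT : ∀ S ∈ T, S ⊆ Icc 1 n) (hS : S ∈ T) (hne : S.Nonempty)
    (hn : 1 ≤ n) : S ∈ hatCollection n T :=
  mem_hatCollection.2 (.inr ⟨hne, S, hS, n, mem_Icc.2 ⟨hn, le_rfl⟩,
    (inter_eq_left.2 (hT S hS)).symm⟩)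

/-- Removing the largest element of an initial segment `S₁ ∩ {1,…,i}` gives a shorter one. -/
theorem sup_mem_and_erase_mem_hatCollection (hS : S ∈ hatCollection n T) :
    S.sup id ∈ S ∧ (2 ≤ S.card → S.erase (S.sup id) ∈ hatCollection n T) := by
  obtain ⟨m, hm, hmS⟩ := exists_mem_eq_sup S (nonempty_of_mem_hatCollection hS) id
  replace hmS : S.sup id = m := hmS
  rw [hmS]
  refine ⟨hm, fun h2 => ?_⟩
  have hle : ∀ x ∈ S, x ≤ m := fun x hx => hmS ▸ (le_sup (f := id) hx : x ≤ S.sup id)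
  rcases mem_hatCollection.1 hS with ⟨j, -, rfl⟩ | ⟨-, S₁, hS₁, i, hi, rfl⟩
  · simp at h2
  obtain ⟨x, hx, hxm⟩ := exists_mem_ne h2 m
  have hx1 := (mem_Icc.1 (mem_inter.1 hx).2).1
  have hmi := (mem_Icc.1 (mem_inter.1 hm).2).2
  have hx' := hle x hx
  refine mem_hatCollection.2 (.inr ⟨⟨x, mem_erase.2 ⟨hxm, hx⟩⟩, S₁, hS₁, m - 1,
    mem_Icc.2 ⟨by omega, by have := (mem_Icc.1 hi).2; omega⟩, ?_⟩)
  ext y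
  simp only [mem_erase, mem_inter, mem_Icc]
  constructor
  · rintro ⟨hym, hy, hy1, hyi⟩
    have := hle y (mem_inter.2 ⟨hy, mem_Icc.2 ⟨hy1, hyi⟩⟩)
    exact ⟨hy, hy1, by omega⟩
  · rintro ⟨hy, hy1, hym⟩
    exact ⟨by omega, hy, hy1, by omega⟩

theorem notMem_hatCollection (hn : 2 ≤ n) (hT : ∀ S ∈ T, S ⊆ Icc 1 n) (hUT : Icc 1 n ∉ T) :
    Icc 1 n ∉ hatCollection n T := by
  intro hU
  rcases mem_hatCollection.1 hU with ⟨j, -, hj⟩ | ⟨-, S₁, hS₁, i, -, hS⟩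
  · have := congrArg card hj
    rw [Nat.card_Icc, card_singleton] at this
    omega
  · exact hUT ((hT S₁ hS₁).antisymm (hS ▸ inter_subset_left) ▸ hS₁)

theorem exists_superset_of_mem_hatCollection (hcov : T.sup id = Icc 1 n)
    (hS : S ∈ hatCollection n T) : ∃ g ∈ T, S ⊆ g := by
  rcases mem_hatCollection.1 hS with ⟨j, hj, rfl⟩ | ⟨-, S₁, hS₁, i, -, rfl⟩
  · obtain ⟨g, hg, hjg⟩ := mem_sup.1 (hcov ▸ hj : j ∈ T.sup id)
    exact ⟨g, hg, singleton_subset_iff.2 hjg⟩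
  · exact ⟨S₁, hS₁, inter_subset_left⟩

end HatCollection

/-- for `U = {1,…,n}` (`n ≥ 2`) and a collection `T` of subsets of `U`
covering `U` with `U ∉ T`, letting `T̂` be `T` augmented by all singletons and all
nonempty initial segments, and `ŝ` the minimum compression size of the twinned incidence
graph of `T̂`: `U` has a cover from `T` of size at most `k` iff the twinned incidence
graph of `T̂ ∪ {U}` has a DAG compression of size at most `ŝ + k + 2`. -/
theorem set_cover_iff_compression (n : ℕ) (hn : 2 ≤ n)
    (T : Finset (Finset ℕ)) (hT : ∀ S ∈ T, S ⊆ Finset.Icc 1 n)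
    (hcov : T.sup id = Finset.Icc 1 n) (hUT : Finset.Icc 1 n ∉ T) (k : ℕ) :
    (∃ X ⊆ T, X.sup id = Finset.Icc 1 n ∧ X.card ≤ k) ↔
      ∃ (V : Finset (TigVertex ℕ)) (A E : Finset (TigVertex ℕ × TigVertex ℕ)),
        IsDagCompression
          (tigV (Finset.Icc 1 n) (insert (Finset.Icc 1 n) (hatCollection n T)))
          (tigE (insert (Finset.Icc 1 n) (hatCollection n T))) V A E ∧
        A.card + E.card ≤
          minCompSize (tigV (Finset.Icc 1 n) (hatCollection n T))
            (tigE (hatCollection n T)) + k + 2 := by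
  have hHU : ∀ S ∈ hatCollection n T, S ⊆ Icc 1 n := fun S => subset_of_mem_hatCollection hT
  have hUH := notMem_hatCollection hn hT hUT
  have hlow := le_minCompSize (isDagCompression_self (tigE_subset hHU)) fun V A E hD =>
    two_mul_card_add_le_of_isDagCompression (fun S => nonempty_of_mem_hatCollection) hHU
      (fun j => singleton_mem_hatCollection) hD
  constructor
  · rintro ⟨X, hXT, hXU, hXk⟩
    have hXH : X.erase ∅ ⊆ hatCollection n T := fun S hS => mem_hatCollection_of_mem hT
      (hXT (mem_of_mem_erase hS)) (nonempty_iff_ne_empty.2 (ne_of_mem_erase hS)) (by omega)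
    obtain ⟨V, A, E, hD, hsize⟩ := exists_isDagCompression_insert 0 (fun S => S.sup id)
      (by simp) hHU hUH (fun S => sup_mem_and_erase_mem_hatCollection)
      (by rw [Nat.card_Icc]; omega) hXH (by rw [← bot_eq_empty, sup_erase_bot, hXU])
    exact ⟨V, A, E, hD, by have := card_le_card (erase_subset ∅ X); omega⟩
  · rintro ⟨V, A, E, hD, hsize⟩
    obtain ⟨V₀, A₀, E₀, X, hD₀, hXT, hUX, hX⟩ := hD.exists_excise hUH
      (nonempty_Icc.2 (by omega)) subset_rfl hHU
      (fun S => exists_superset_of_mem_hatCollection hcov)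
      (fun g hg hUg => hUT ((hT g hg).antisymm hUg ▸ hg))
      (fun j hj => mem_sup.1 (hcov ▸ hj : j ∈ T.sup id))
    refine ⟨X, hXT, (Finset.sup_le fun S hS => hT S (hXT hS)).antisymm hUX, ?_⟩
    have := minCompSize_le hD₀
    omega
end
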